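/- arXiv:2401.10579 — 6 statements merged into one kernel-verified Lean document; each statement's English description precedes it below -/
import Mathlib

section
/- Let G=(V,E) be a finite DAG with m roots. If there exists an irreversible pebbling strategy on G with pebbling cost C and pebbling time T, then there exists a spooky pebbling strategy on G with pebbling cost at most C+m and pebbling time at most T+(T+1)(|V|−m). -/
variable {V : Type*}

/-- The set of roots (vertices with out-degree 0) of the graph with edge relation `E`. -/
noncomputable def rootFinset [Finite V] (E : V → V → Prop) : Finset V :=
  (Set.toFinite {v | ∀ w, ¬ E v w}).toFinset

/-- One move of the irreversible pebble game: pebble a vertex whose direct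
predecessors are all pebbled, or unpebble any vertex. -/
def IrrevStep [DecidableEq V] (E : V → V → Prop) (A B : Finset V) : Prop :=
  ∃ v : V, (B = insert v A ∧ ∀ w, E w v → w ∈ A) ∨ B = A.erase v

/-- An irreversible pebbling strategy with pebbling time `T`. -/
def IsIrrevStrategy [Finite V] [DecidableEq V] (E : V → V → Prop)
    (P : ℕ → Finset V) (T : ℕ) : Prop :=
  P 0 = ∅ ∧ P T = rootFinset E ∧
    ∀ t, 1 ≤ t → t ≤ T → IrrevStep E (P (t - 1)) (P t)

/-- One move of the spooky pebble game: pebble, unpebble, ghost or unghost. -/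
def SpookyStep [DecidableEq V] (E : V → V → Prop) (A B SA SB : Finset V) : Prop :=
  ∃ v : V,
    (B = insert v A ∧ SB = SA ∧ ∀ w, E w v → w ∈ A) ∨
    (B = A.erase v ∧ SB = SA ∧ ∀ w, E w v → w ∈ A) ∨
    (B = A.erase v ∧ SB = insert v SA) ∨
    (B = insert v A ∧ SB = SA.erase v ∧ ∀ w, E w v → w ∈ A)

/-- A spooky pebbling sub-strategy: the move rules hold, with no boundary conditions. -/
def IsSpookySubStrategy [DecidableEq V] (E : V → V → Prop)
    (P S : ℕ → Finset V) (T : ℕ) : Prop :=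
  ∀ t, 1 ≤ t → t ≤ T → SpookyStep E (P (t - 1)) (P t) (S (t - 1)) (S t)

/-- A spooky pebbling strategy with pebbling time `T`. -/
def IsSpookyStrategy [Finite V] [DecidableEq V] (E : V → V → Prop)
    (P S : ℕ → Finset V) (T : ℕ) : Prop :=
  P 0 = ∅ ∧ S 0 = ∅ ∧ P T = rootFinset E ∧ S T = ∅ ∧
    IsSpookySubStrategy E P S T

/-- The pebbling cost of a strategy of time `T`: the maximal number of pebbles used. -/
def pebCost (P : ℕ → Finset V) (T : ℕ) : ℕ :=
  (Finset.range (T + 1)).sup fun t => (P t).card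

/-- The ghosting cost of a spooky strategy of time `T`: the maximal number of ghosts used. -/
def ghostCost (S : ℕ → Finset V) (T : ℕ) : ℕ :=
  (Finset.range (T + 1)).sup fun t => (S t).card

/-- Acyclicity of the edge relation: no directed cycles. -/
def Acyclic (E : V → V → Prop) : Prop := ∀ v, ¬ Relation.TransGen E v v

/-- The grid DAG `G◇_P` on vertex set `Fin P × Fin P` (0-indexed, so the leaf “(1,1)”
is `(0,0)` and the root “(P,P)” is `(P-1,P-1)`), with edges `(i,j)→(i+1,j)` and
`(i,j)→(i,j+1)`. -/
def gridE (P : ℕ) (a b : Fin P × Fin P) : Prop :=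
  ((b.1 : ℕ) = (a.1 : ℕ) + 1 ∧ b.2 = a.2) ∨
  (b.1 = a.1 ∧ (b.2 : ℕ) = (a.2 : ℕ) + 1)


section SpookyAux

section Chains
variable {V : Type*} [DecidableEq V]

variable {V : Type*} [DecidableEq V]

inductive SChain (E : V → V → Prop) (Good : Finset V → Prop) :
    Finset V × Finset V → Finset V × Finset V → ℕ → Prop
  | refl (a : Finset V × Finset V) (h : Good a.1) : SChain E Good a a 0
  | step {a b c : Finset V × Finset V} {n : ℕ} (h : Good a.1)
      (hs : SpookyStep E a.1 b.1 a.2 b.2) (hc : SChain E Good b c n) :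
      SChain E Good a c (n + 1)

variable {E : V → V → Prop} {Good : Finset V → Prop}

lemma SChain.good_end {a b : Finset V × Finset V} {n : ℕ} (h : SChain E Good a b n) :
    Good b.1 := by
  induction h with
  | refl a h => exact h
  | step h hs hc ih => exact ih

lemma SChain.trans {a b c : Finset V × Finset V} {n m : ℕ}
    (h1 : SChain E Good a b n) (h2 : SChain E Good b c m) : SChain E Good a c (n + m) := by
  induction h1 with
  | refl a h => rw [Nat.zero_add]; exact h2
  | step h hs hc ih => rw [Nat.add_right_comm]; exact .step h hs (ih h2)

lemma SChain.snoc {a b c : Finset V × Finset V} {n : ℕ} (h1 : SChain E Good a b n)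
    (hs : SpookyStep E b.1 c.1 b.2 c.2) (hg : Good c.1) : SChain E Good a c (n + 1) :=
  h1.trans (.step h1.good_end hs (.refl c hg))

lemma SChain.toFun {a b : Finset V × Finset V} {n : ℕ} (h : SChain E Good a b n) :
    ∃ P S : ℕ → Finset V, P 0 = a.1 ∧ S 0 = a.2 ∧
      (∀ t, n ≤ t → P t = b.1 ∧ S t = b.2) ∧
      (∀ t, 1 ≤ t → t ≤ n → SpookyStep E (P (t - 1)) (P t) (S (t - 1)) (S t)) ∧
      (∀ t, Good (P t)) := by
  induction h with
  | refl a h =>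
    exact ⟨fun _ => a.1, fun _ => a.2, rfl, rfl, fun t _ => ⟨rfl, rfl⟩,
      fun t h1 h2 => absurd (h1.trans h2) (by omega), fun t => h⟩
  | @step a b c n hg hs hc ih =>
    obtain ⟨P, S, hP0, hS0, hend, hstep, hgood⟩ := ih
    refine ⟨fun t => if t = 0 then a.1 else P (t - 1),
            fun t => if t = 0 then a.2 else S (t - 1), by simp, by simp, ?_, ?_, ?_⟩
    · intro t ht
      have h1 : t ≠ 0 := by omega
      simp only [if_neg h1]
      exact hend (t - 1) (by omega)
    · intro t h1 h2
      rcases Nat.eq_or_lt_of_le h1 with h1' | h1'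
      · simp only [← h1', if_pos rfl, if_neg one_ne_zero]
        simpa [Nat.sub_self, hP0, hS0] using hs
      · have ht0 : t ≠ 0 := by omega
        have ht1 : t - 1 ≠ 0 := by omega
        have hst := hstep (t - 1) (by omega) (by omega)
        simp only [if_neg ht0, if_neg ht1]
        convert hst using 3
    · intro t
      by_cases h : t = 0
      · simpa [h] using hg
      · simpa [h] using hgood (t - 1)

variable {E : V → V → Prop} {Pf : ℕ → Finset V} {T C : ℕ}

lemma drop_card (hstep : ∀ t < T, IrrevStep E (Pf t) (Pf (t + 1))) :
    ∀ d t, t + d ≤ T → ((Pf t) \ (Pf (t + d))).card ≤ d := by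
  intro d
  induction d with
  | zero => simp
  | succ d ih =>
    intro t ht
    have h1 : (Pf t \ Pf (t + d)).card ≤ d := ih t (by omega)
    have he : t + (d + 1) = (t + d) + 1 := by omega
    rw [he]
    obtain ⟨v, hv⟩ := hstep (t + d) (by omega)
    rcases hv with ⟨hins, -⟩ | hera
    · refine le_trans (le_trans (Finset.card_le_card ?_) h1) (by omega)
      rw [hins]
      exact Finset.sdiff_subset_sdiff (le_refl _) (Finset.subset_insert _ _)
    · have hsub : Pf t \ Pf (t + d + 1) ⊆ insert v (Pf t \ Pf (t + d)) := by
        intro x hx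
        rw [Finset.mem_sdiff, hera, Finset.mem_erase] at hx
        rcases Classical.em (x = v) with h | h
        · simp [h]
        · simp only [Finset.mem_insert, Finset.mem_sdiff]
          tauto
      calc (Pf t \ Pf (t + d + 1)).card ≤ (insert v (Pf t \ Pf (t + d))).card :=
            Finset.card_le_card hsub
        _ ≤ (Pf t \ Pf (t + d)).card + 1 := Finset.card_insert_le _ _
        _ ≤ d + 1 := by omega

lemma good_of_subset (hC : ∀ t ≤ T, (Pf t).card ≤ C) {B A : Finset V} (hB : B ⊆ Pf T)
    {t : ℕ} (ht : t ≤ T) (hA : A ⊆ Pf t ∪ B) : A.card ≤ C + (Pf T).card :=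
  le_trans (Finset.card_le_card hA) (le_trans (Finset.card_union_le _ _)
    (Nat.add_le_add (hC t ht) (Finset.card_le_card hB)))

lemma replay (h0 : Pf 0 = ∅) (hstep : ∀ t < T, IrrevStep E (Pf t) (Pf (t + 1)))
    (hC : ∀ t ≤ T, (Pf t).card ≤ C) (B : Finset V) (hB : B ⊆ Pf T) :
    ∀ t, t ≤ T → ∀ S0 : Finset V, (∀ v ∈ S0, v ∉ B) →
    ∃ S1 m, m ≤ t ∧
      SChain E (fun A => A.card ≤ C + (Pf T).card) (Pf 0 ∪ B, S0) (Pf t ∪ B, S1) m ∧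
      (∀ v ∈ S1, v ∈ S0 ∨ ∃ s < t, v ∈ Pf s) ∧
      (∀ v ∈ S1, v ∉ Pf t ∧ v ∉ B) ∧
      (∀ v ∈ S0, v ∉ S1 → ∃ s ≤ t, v ∈ Pf s) := by
  intro t
  induction t with
  | zero =>
    intro _ S0 hS0
    refine ⟨S0, 0, le_rfl, .refl _ (good_of_subset hC hB (Nat.zero_le T) (le_refl _)),
      fun v hv => Or.inl hv, fun v hv => ⟨by simp [h0], hS0 v hv⟩,
      fun v hv h => absurd hv h⟩
  | succ t ih =>
    intro ht S0 hS0
    obtain ⟨S1, m, hm, hch, ha, hb, hc⟩ := ih (by omega) S0 hS0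
    obtain ⟨v, hv⟩ := hstep t (by omega)
    rcases hv with ⟨hins, hpred⟩ | hera
    · by_cases hvS : v ∈ S1
      · -- unghost v
        refine ⟨S1.erase v, m + 1, by omega, ?_, ?_, ?_, ?_⟩
        · refine hch.snoc ⟨v, Or.inr (Or.inr (Or.inr ⟨?_, rfl, ?_⟩))⟩ ?_
          · show Pf (t+1) ∪ B = insert v (Pf t ∪ B)
            rw [hins, Finset.insert_union]
          · exact fun w hw => Finset.mem_union_left _ (hpred w hw)
          · exact good_of_subset hC hB (by omega : t + 1 ≤ T) (le_refl _)
        · intro w hw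
          rcases ha w (Finset.mem_of_mem_erase hw) with h | ⟨s, hs1, hs2⟩
          · exact Or.inl h
          · exact Or.inr ⟨s, by omega, hs2⟩
        · intro w hw
          rw [Finset.mem_erase] at hw
          obtain ⟨hb1, hb2⟩ := hb w hw.2
          refine ⟨?_, hb2⟩
          rw [hins, Finset.mem_insert]
          tauto
        · intro w hw hwn
          by_cases h : w ∈ S1
          · have : w = v := by
              by_contra hne
              exact hwn (Finset.mem_erase.mpr ⟨hne, h⟩)
            exact ⟨t + 1, le_refl _, by rw [hins, this]; exact Finset.mem_insert_self _ _⟩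
          · obtain ⟨s, hs1, hs2⟩ := hc w hw h
            exact ⟨s, by omega, hs2⟩
      · -- pebble v
        refine ⟨S1, m + 1, by omega, ?_, ?_, ?_, ?_⟩
        · refine hch.snoc ⟨v, Or.inl ⟨?_, rfl, ?_⟩⟩ ?_
          · show Pf (t+1) ∪ B = insert v (Pf t ∪ B)
            rw [hins, Finset.insert_union]
          · exact fun w hw => Finset.mem_union_left _ (hpred w hw)
          · exact good_of_subset hC hB (by omega : t + 1 ≤ T) (le_refl _)
        · intro w hw
          rcases ha w hw with h | ⟨s, hs1, hs2⟩
          · exact Or.inl h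
          · exact Or.inr ⟨s, by omega, hs2⟩
        · intro w hw
          obtain ⟨hb1, hb2⟩ := hb w hw
          refine ⟨?_, hb2⟩
          rw [hins, Finset.mem_insert]
          push_neg
          exact ⟨fun hwv => hvS (hwv ▸ hw), hb1⟩
        · intro w hw hwn
          obtain ⟨s, hs1, hs2⟩ := hc w hw hwn
          exact ⟨s, by omega, hs2⟩
    · by_cases hcase : v ∈ B ∨ v ∉ Pf t
      · -- skip
        have heq : Pf (t + 1) ∪ B = Pf t ∪ B := by
          rw [hera]
          ext x
          simp only [Finset.mem_union, Finset.mem_erase]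
          constructor
          · tauto
          · intro h
            rcases Classical.em (x = v) with rfl | hne <;> tauto
        refine ⟨S1, m, by omega, by rw [heq]; exact hch, ?_, ?_, ?_⟩
        · intro w hw
          rcases ha w hw with h | ⟨s, hs1, hs2⟩
          · exact Or.inl h
          · exact Or.inr ⟨s, by omega, hs2⟩
        · intro w hw
          obtain ⟨hb1, hb2⟩ := hb w hw
          refine ⟨fun hmem => hb1 ?_, hb2⟩
          rw [hera] at hmem
          exact Finset.mem_of_mem_erase hmem
        · intro w hw hwn
          obtain ⟨s, hs1, hs2⟩ := hc w hw hwn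
          exact ⟨s, by omega, hs2⟩
      · -- ghost v
        push_neg at hcase
        obtain ⟨hvB, hvPf⟩ := hcase
        have heq : Pf (t + 1) ∪ B = (Pf t ∪ B).erase v := by
          rw [hera]
          ext x
          simp only [Finset.mem_union, Finset.mem_erase]
          constructor
          · rintro (⟨hne, hx⟩ | hx)
            · exact ⟨hne, Or.inl hx⟩
            · exact ⟨fun h => hvB (h ▸ hx), Or.inr hx⟩
          · tauto
        refine ⟨insert v S1, m + 1, by omega, ?_, ?_, ?_, ?_⟩
        · refine hch.snoc ⟨v, Or.inr (Or.inr (Or.inl ⟨heq, rfl⟩))⟩ ?_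
          exact good_of_subset hC hB (by omega : t + 1 ≤ T) (le_refl _)
        · intro w hw
          rcases Finset.mem_insert.mp hw with rfl | hw'
          · exact Or.inr ⟨t, by omega, hvPf⟩
          · rcases ha w hw' with h | ⟨s, hs1, hs2⟩
            · exact Or.inl h
            · exact Or.inr ⟨s, by omega, hs2⟩
        · intro w hw
          rcases Finset.mem_insert.mp hw with rfl | hw'
          · exact ⟨by rw [hera]; simp, hvB⟩
          · obtain ⟨hb1, hb2⟩ := hb w hw'
            refine ⟨fun hmem => hb1 (by rw [hera] at hmem; exact Finset.mem_of_mem_erase hmem), hb2⟩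
        · intro w hw hwn
          have : w ∉ S1 := fun h => hwn (Finset.mem_insert_of_mem h)
          obtain ⟨s, hs1, hs2⟩ := hc w hw this
          exact ⟨s, by omega, hs2⟩

variable {Good : Finset V → Prop}

lemma teardown {R : Finset V} :
    ∀ n (A S : Finset V), (A \ R).card = n → R ⊆ A → (∀ A' ⊆ A, Good A') →
    SChain E Good (A, S) (R, S ∪ (A \ R)) n := by
  intro n
  induction n with
  | zero =>
    intro A S hcard hsub hgood
    have hAR : A = R := by
      apply Finset.Subset.antisymm _ hsub
      intro x hx
      by_contra hxR
      have : x ∈ A \ R := Finset.mem_sdiff.mpr ⟨hx, hxR⟩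
      rw [Finset.card_eq_zero] at hcard
      simp [hcard] at this
    subst hAR
    have he : S ∪ (A \ A) = S := by simp
    rw [he]
    exact SChain.refl _ (hgood A (le_refl A))
  | succ n ih =>
    intro A S hcard hsub hgood
    have hne : (A \ R).Nonempty := Finset.card_pos.mp (by omega)
    obtain ⟨v, hv⟩ := hne
    rw [Finset.mem_sdiff] at hv
    have h1 : SpookyStep E A (A.erase v) S (insert v S) :=
      ⟨v, Or.inr (Or.inr (Or.inl ⟨rfl, rfl⟩))⟩
    have h2 := ih (A.erase v) (insert v S)
      (by rw [Finset.erase_sdiff_comm]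
          rw [Finset.card_erase_of_mem (Finset.mem_sdiff.mpr hv), hcard]
          omega)
      (fun x hx => Finset.mem_erase.mpr ⟨fun h => hv.2 (h ▸ hx), hsub hx⟩)
      (fun A' hA' => hgood A' (hA'.trans (Finset.erase_subset _ _)))
    have heq : insert v S ∪ (A.erase v \ R) = S ∪ (A \ R) := by
      rw [Finset.erase_sdiff_comm]
      ext x
      simp only [Finset.mem_union, Finset.mem_insert, Finset.mem_erase, Finset.mem_sdiff]
      rcases Classical.em (x = v) with rfl | hne'
      · tauto
      · tauto
    rw [heq] at h2
    exact SChain.step (hgood A (le_refl _)) h1 h2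

/-- Number of non-root vertices pebbled within the first `k` steps. -/
noncomputable def ghostBound [Fintype V] (Pf : ℕ → Finset V) (T k : ℕ) : ℕ :=
  (@Finset.filter V (fun v => v ∉ Pf T ∧ ∃ s ≤ k, v ∈ Pf s)
    (Classical.decPred _) Finset.univ).card

variable [Fintype V] {E : V → V → Prop} {Pf : ℕ → Finset V} {T C : ℕ}

lemma cleanup (h0 : Pf 0 = ∅) (hstep : ∀ t < T, IrrevStep E (Pf t) (Pf (t + 1)))
    (hC : ∀ t ≤ T, (Pf t).card ≤ C) :
    ∀ k, k ≤ T → ∀ S : Finset V, (∀ v ∈ S, v ∉ Pf T ∧ ∃ s ≤ k, v ∈ Pf s) →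
    ∃ m, m ≤ (T + 1) * ghostBound Pf T k ∧
      SChain E (fun A => A.card ≤ C + (Pf T).card) (Pf T, S) (Pf T, ∅) m := by
  intro k
  induction k using Nat.strong_induction_on with
  | _ k IH =>
  intro hk S hS
  rcases Finset.eq_empty_or_nonempty S with rfl | hSne
  · exact ⟨0, Nat.zero_le _, SChain.refl _ (good_of_subset hC (le_refl (Pf T)) hk
      (Finset.subset_union_right))⟩
  -- the first-pebbling-time function
  set f : V → ℕ := fun v => sInf {s | v ∈ Pf s} with hf
  obtain ⟨g, hgS, hgmax⟩ := Finset.exists_max_image S f hSne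
  obtain ⟨hgR, sg, hsgk, hsgPf⟩ := hS g hgS
  have hgf : g ∈ Pf (f g) := by
    have := Nat.sInf_mem (s := {s | g ∈ Pf s}) ⟨sg, hsgPf⟩
    simpa using this
  have hfg_le : f g ≤ k := le_trans (Nat.sInf_le (show sg ∈ {s | g ∈ Pf s} from hsgPf)) hsgk
  have hfg_pos : 1 ≤ f g := by
    rcases Nat.eq_zero_or_pos (f g) with h | h
    · rw [h, h0] at hgf; simp at hgf
    · exact h
  have hgmin : ∀ s < f g, g ∉ Pf s := fun s hs =>
    Nat.notMem_of_lt_sInf (s := {s | g ∈ Pf s}) hs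
  set t₀ := f g - 1 with ht₀
  have hfg_eq : f g = t₀ + 1 := by omega
  -- the step at time f g pebbles g
  obtain ⟨v, hv⟩ := hstep t₀ (by omega)
  have hgt₀ : g ∉ Pf t₀ := hgmin t₀ (by omega)
  have hgt₁ : g ∈ Pf (t₀ + 1) := hfg_eq ▸ hgf
  rcases hv with ⟨hins, hpred⟩ | hera
  swap
  · rw [hera] at hgt₁
    exact absurd (Finset.mem_of_mem_erase hgt₁) hgt₀
  have hveq : v = g := by
    rw [hins, Finset.mem_insert] at hgt₁
    rcases hgt₁ with h | h
    · exact h.symm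
    · exact absurd h hgt₀
  rw [hveq] at hins hpred
  -- replay up to t₀
  obtain ⟨S1, m1, hm1, hch1, ha, hb, hc⟩ := replay h0 hstep hC (Pf T) (le_refl _)
    t₀ (by omega) S (fun v hv => (hS v hv).1)
  rw [h0, Finset.empty_union] at hch1
  have hgS1 : g ∈ S1 := by
    by_contra hgn
    obtain ⟨s, hs1, hs2⟩ := hc g hgS hgn
    exact hgmin s (by omega) hs2
  -- unghost g
  have hgood2 : (insert v (Pf t₀ ∪ Pf T)).card ≤ C + (Pf T).card → True := fun _ => trivial
  have hins' : Pf (t₀ + 1) ∪ Pf T = insert g (Pf t₀ ∪ Pf T) := by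
    rw [hins, Finset.insert_union]
  have hch2 : SChain E (fun A => A.card ≤ C + (Pf T).card)
      (Pf T, S) (Pf (t₀ + 1) ∪ Pf T, S1.erase g) (m1 + 1) := by
    refine hch1.snoc ⟨g, Or.inr (Or.inr (Or.inr ⟨hins', rfl, ?_⟩))⟩ ?_
    · exact fun w hw => Finset.mem_union_left _ (hpred w hw)
    · exact good_of_subset hC (le_refl _) (show t₀ + 1 ≤ T by omega) (le_refl _)
  -- unpebble g
  have hgPfT : g ∉ Pf T := hgR
  have hgnot : g ∉ Pf t₀ ∪ Pf T := by
    rw [Finset.mem_union]; tauto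
  have hera' : Pf t₀ ∪ Pf T = (Pf (t₀ + 1) ∪ Pf T).erase g := by
    rw [hins', Finset.erase_insert hgnot]
  have hch3 : SChain E (fun A => A.card ≤ C + (Pf T).card)
      (Pf T, S) (Pf t₀ ∪ Pf T, S1.erase g) (m1 + 1 + 1) := by
    refine hch2.snoc ⟨g, Or.inr (Or.inl ⟨hera', rfl, ?_⟩)⟩ ?_
    · intro w hw
      rw [hins']
      exact Finset.mem_insert_of_mem (Finset.mem_union_left _ (hpred w hw))
    · exact good_of_subset hC (le_refl _) (show t₀ ≤ T by omega) (le_refl _)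
  -- teardown
  set D := (Pf t₀ ∪ Pf T) \ Pf T with hD
  have hch4 : SChain E (fun A => A.card ≤ C + (Pf T).card)
      (Pf T, S) (Pf T, (S1.erase g) ∪ D) (m1 + 1 + 1 + D.card) := by
    refine hch3.trans (teardown D.card (Pf t₀ ∪ Pf T) (S1.erase g) rfl
      Finset.subset_union_right ?_)
    intro A' hA'
    exact good_of_subset hC (le_refl _) (show t₀ ≤ T by omega) hA'
  have hDeq : D = Pf t₀ \ Pf T := by
    rw [hD, Finset.union_sdiff_right]
  -- card of D bound
  have hDcard : D.card ≤ T - (t₀ + 1) := by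
    rw [hDeq]
    have hsub : Pf t₀ \ Pf T ⊆ Pf (t₀ + 1) \ Pf T := by
      apply Finset.sdiff_subset_sdiff _ (le_refl _)
      rw [hins]
      exact Finset.subset_insert _ _
    have := drop_card (Pf := Pf) (E := E) hstep (T - (t₀ + 1)) (t₀ + 1)
      (by omega)
    have heq : t₀ + 1 + (T - (t₀ + 1)) = T := by omega
    rw [heq] at this
    exact le_trans (Finset.card_le_card hsub) this
  -- recursion hypotheses for new ghost set
  set S' := (S1.erase g) ∪ D with hS'
  have hS'prop : ∀ v ∈ S', v ∉ Pf T ∧ ∃ s ≤ t₀, v ∈ Pf s := by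
    intro w hw
    rw [hS', Finset.mem_union] at hw
    rcases hw with hw | hw
    · have hw1 := Finset.mem_of_mem_erase hw
      have hwg : w ≠ g := (Finset.mem_erase.mp hw).1
      obtain ⟨hnPf, hnB⟩ := hb w hw1
      refine ⟨hnB, ?_⟩
      rcases ha w hw1 with hwS | ⟨s, hs1, hs2⟩
      · -- w was an original ghost; use maximality of f g and distinctness
        have hfw_le : f w ≤ f g := hgmax w hwS
        obtain ⟨-, sw, hsw1, hsw2⟩ := hS w hwS
        have hwf : w ∈ Pf (f w) := by
          have := Nat.sInf_mem (s := {s | w ∈ Pf s}) ⟨sw, hsw2⟩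
          simpa using this
        have hfw_ne : f w ≠ f g := by
          intro hcontra
          have hwf' := hwf
          rw [hcontra, hfg_eq, hins, Finset.mem_insert] at hwf'
          rcases hwf' with h | h
          · exact hwg h
          · have : f w ≤ t₀ := Nat.sInf_le (show t₀ ∈ {s | w ∈ Pf s} from h)
            omega
        exact ⟨f w, by omega, hwf⟩
      · exact ⟨s, by omega, hs2⟩
    · rw [hDeq, Finset.mem_sdiff] at hw
      exact ⟨hw.2, t₀, le_refl _, hw.1⟩
  have hrec := IH t₀ (by omega) (by omega) S' hS'prop
  obtain ⟨m2, hm2, hch5⟩ := hrec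
  refine ⟨m1 + 1 + 1 + D.card + m2, ?_, hch4.trans hch5⟩
  -- counting
  have hgb : ghostBound Pf T t₀ + 1 ≤ ghostBound Pf T k := by
    have hss : (@Finset.filter V (fun v => v ∉ Pf T ∧ ∃ s ≤ t₀, v ∈ Pf s)
        (Classical.decPred _) Finset.univ) ⊂
        (@Finset.filter V (fun v => v ∉ Pf T ∧ ∃ s ≤ k, v ∈ Pf s)
        (Classical.decPred _) Finset.univ) := by
      constructor
      · intro x hx
        simp only [Finset.mem_filter, Finset.mem_univ, true_and] at hx ⊢
        obtain ⟨h1, s, hs1, hs2⟩ := hx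
        exact ⟨h1, s, by omega, hs2⟩
      · intro hcon
        have hgmem : g ∈ (@Finset.filter V (fun v => v ∉ Pf T ∧ ∃ s ≤ k, v ∈ Pf s)
            (Classical.decPred _) Finset.univ) := by
          simp only [Finset.mem_filter, Finset.mem_univ, true_and]
          exact ⟨hgR, f g, hfg_le, hgf⟩
        have := hcon hgmem
        simp only [Finset.mem_filter, Finset.mem_univ, true_and] at this
        obtain ⟨-, s, hs1, hs2⟩ := this
        exact hgmin s (by omega) hs2
    exact Finset.card_lt_card hss
  have hlen : m1 + 1 + 1 + D.card ≤ T + 1 := by omega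
  calc m1 + 1 + 1 + D.card + m2 ≤ (T + 1) + (T + 1) * ghostBound Pf T t₀ := by omega
    _ = (T + 1) * (ghostBound Pf T t₀ + 1) := by ring
    _ ≤ (T + 1) * ghostBound Pf T k := Nat.mul_le_mul_left _ hgb

end Chains

end SpookyAux

/-- If a finite DAG `G` with `m` roots has an irreversible pebbling
strategy with pebbling cost `C` and pebbling time `T`, then it has a spooky pebbling
strategy with pebbling cost at most `C + m` and pebbling time at most
`T + (T+1)(|V| - m)`. -/
theorem irrev_to_spooky {V : Type*} [Fintype V] [DecidableEq V] (E : V → V → Prop)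
    (hacyc : Acyclic E) (Pf : ℕ → Finset V) (T C : ℕ)
    (hstrat : IsIrrevStrategy E Pf T) (hcost : pebCost Pf T = C) :
    ∃ (P' S' : ℕ → Finset V) (T' : ℕ),
      IsSpookyStrategy E P' S' T' ∧
      pebCost P' T' ≤ C + (rootFinset E).card ∧
      T' ≤ T + (T + 1) * (Fintype.card V - (rootFinset E).card) := by
  classical
  obtain ⟨h0, hT, hsteps⟩ := hstrat
  have hstep' : ∀ t < T, IrrevStep E (Pf t) (Pf (t + 1)) := by
    intro t ht
    have := hsteps (t + 1) (Nat.le_add_left 1 t) (Nat.succ_le_of_lt ht)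
    simpa using this
  have hC : ∀ t ≤ T, (Pf t).card ≤ C := by
    intro t ht
    rw [← hcost]
    show (Pf t).card ≤ (Finset.range (T + 1)).sup fun t => (Pf t).card
    have ht' : t ∈ Finset.range (T + 1) := Finset.mem_range.mpr (by omega)
    exact Finset.le_sup (f := fun t => (Pf t).card) ht'
  obtain ⟨S1, m1, hm1, hch1, ha, hb, -⟩ :=
    replay h0 hstep' hC ∅ (Finset.empty_subset _) T le_rfl ∅ (by simp)
  rw [Finset.union_empty, Finset.union_empty] at hch1
  have hS1 : ∀ v ∈ S1, v ∉ Pf T ∧ ∃ s ≤ T, v ∈ Pf s := by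
    intro v hv
    refine ⟨(hb v hv).1, ?_⟩
    rcases ha v hv with h | ⟨s, hs1, hs2⟩
    · simp at h
    · exact ⟨s, by omega, hs2⟩
  obtain ⟨m2, hm2, hch2⟩ := cleanup h0 hstep' hC T le_rfl S1 hS1
  have hch : SChain E (fun A => A.card ≤ C + (Pf T).card) (Pf 0, ∅) (Pf T, ∅) (m1 + m2) :=
    hch1.trans hch2
  obtain ⟨P', S', hP0, hS0, hend, hsub, hgood⟩ := hch.toFun
  have hgb : ghostBound Pf T T ≤ Fintype.card V - (rootFinset E).card := by
    have hsub' : (@Finset.filter V (fun v => v ∉ Pf T ∧ ∃ s ≤ T, v ∈ Pf s)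
        (Classical.decPred _) Finset.univ) ⊆ Finset.univ \ Pf T := by
      intro x hx
      simp only [Finset.mem_filter, Finset.mem_univ, true_and] at hx
      simp only [Finset.mem_sdiff, Finset.mem_univ, true_and]
      exact hx.1
    have := Finset.card_le_card hsub'
    rw [Finset.card_sdiff_of_subset (Finset.subset_univ _), Finset.card_univ] at this
    rw [← hT]
    exact this
  refine ⟨P', S', m1 + m2, ⟨by rw [hP0]; exact h0, hS0, ?_, ?_, ?_⟩, ?_, ?_⟩
  · rw [(hend (m1 + m2) le_rfl).1, hT]
  · exact (hend (m1 + m2) le_rfl).2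
  · intro t h1 h2
    exact hsub t h1 h2
  · apply Finset.sup_le
    intro t ht
    rw [← hT]
    exact hgood t
  · have : m2 ≤ (T + 1) * (Fintype.card V - (rootFinset E).card) :=
      le_trans hm2 (Nat.mul_le_mul_left _ hgb)
    omega
end

section
/- Let P_0,P_1,…,P_T be an irreversible pebbling strategy on a finite DAG G=(V,E) with pebbling time T and pebbling cost C, and let R be the set of roots of G. Then for every subset Q⊆V there exists a spooky pebbling sub-strategy (P'_0,S'_0),…,(P'_T,S'_T) on G with (P'_0,S'_0)=(∅,Q) and (P'_T,S'_T)=(R, V∖R), with pebbling time T and pebbling cost C. -/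
variable {V : Type*}

open Classical in
/-- Auxiliary: the set of vertices erased (ghosted) up to time `t`. -/
noncomputable def ghostAux [DecidableEq V] (E : V → V → Prop) (Pf : ℕ → Finset V) (T : ℕ)
    (hstep : ∀ t, 1 ≤ t → t ≤ T → IrrevStep E (Pf (t - 1)) (Pf t)) : ℕ → Finset V
  | 0 => ∅
  | t + 1 =>
    if h : t + 1 ≤ T then
      if Pf (t + 1) = insert ((hstep (t + 1) (Nat.le_add_left 1 t) h).choose) (Pf t) ∧
          ∀ w, E w ((hstep (t + 1) (Nat.le_add_left 1 t) h).choose) → w ∈ Pf t then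
        ghostAux E Pf T hstep t
      else insert ((hstep (t + 1) (Nat.le_add_left 1 t) h).choose) (ghostAux E Pf T hstep t)
    else ghostAux E Pf T hstep t

/-- From an irreversible pebbling strategy with time `T` and cost `C`,
for any `Q ⊆ V` there is a spooky pebbling sub-strategy from `(∅, Q)` to `(R, V∖R)`
with pebbling time `T` and pebbling cost `C`. -/
theorem irrev_to_spooky_sub {V : Type*} [Fintype V] [DecidableEq V] (E : V → V → Prop)
    (hacyc : Acyclic E) (Pf : ℕ → Finset V) (T C : ℕ)
    (hstrat : IsIrrevStrategy E Pf T) (hcost : pebCost Pf T = C) (Q : Finset V) :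
    ∃ P' S' : ℕ → Finset V,
      IsSpookySubStrategy E P' S' T ∧
      P' 0 = ∅ ∧ S' 0 = Q ∧
      P' T = rootFinset E ∧ S' T = Finset.univ \ rootFinset E ∧
      pebCost P' T = C := by
  classical
  obtain ⟨h0, hT, hstep⟩ := hstrat
  set D : ℕ → Finset V := ghostAux E Pf T hstep with hDdef
  have hD0 : D 0 = ∅ := rfl
  have hDsucc : ∀ t, D (t + 1) =
      if h : t + 1 ≤ T then
        if Pf (t + 1) = insert ((hstep (t + 1) (Nat.le_add_left 1 t) h).choose) (Pf t) ∧
            ∀ w, E w ((hstep (t + 1) (Nat.le_add_left 1 t) h).choose) → w ∈ Pf t then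
          D t
        else insert ((hstep (t + 1) (Nat.le_add_left 1 t) h).choose) (D t)
      else D t := by
    intro t
    rw [hDdef, ghostAux]
    by_cases h : t + 1 ≤ T
    · rw [dif_pos h, dif_pos h]
      exact ite_congr rfl (fun _ => rfl) (fun _ => rfl)
    · rw [dif_neg h, dif_neg h]
  have hmono1 : ∀ t, D t ⊆ D (t + 1) := by
    intro t
    rw [hDsucc t]
    split
    · split
      · exact Finset.Subset.refl _
      · exact Finset.subset_insert _ _
    · exact Finset.Subset.refl _
  have hmono : ∀ s t, s ≤ t → D s ⊆ D t := by
    intro s t h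
    induction h with
    | refl => exact Finset.Subset.refl _
    | step h ih => exact ih.trans (hmono1 _)
  -- Lemma A : a vertex that disappears is ghosted
  have hleave : ∀ u, u + 1 ≤ T → ∀ w, w ∈ Pf u → w ∉ Pf (u + 1) → w ∈ D (u + 1) := by
    intro u hu w hw1 hw2
    rw [hDsucc u, dif_pos hu]
    set v := (hstep (u + 1) (Nat.le_add_left 1 u) hu).choose with hv
    have hspec := (hstep (u + 1) (Nat.le_add_left 1 u) hu).choose_spec
    by_cases hc : Pf (u + 1) = insert v (Pf u) ∧ ∀ w, E w v → w ∈ Pf u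
    · exact absurd (hc.1 ▸ Finset.mem_insert_of_mem hw1) hw2
    · rw [if_neg hc]
      have heq : Pf (u + 1) = (Pf u).erase v := hspec.resolve_left hc
      have : w = v := by
        by_contra hne
        exact hw2 (heq ▸ Finset.mem_erase.mpr ⟨hne, hw1⟩)
      exact this ▸ Finset.mem_insert_self _ _
  -- Lemma B : a vertex pebbled at time t is at time T pebbled or ghosted
  have hstay : ∀ k t, t + k = T → ∀ w, w ∈ Pf t → w ∈ Pf T ∨ w ∈ D T := by
    intro k
    induction k with
    | zero =>
      intro t ht w hw
      obtain rfl : t = T := by omega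
      exact Or.inl hw
    | succ k ih =>
      intro t ht w hw
      by_cases h1 : w ∈ Pf (t + 1)
      · exact ih (t + 1) (by omega) w h1
      · exact Or.inr (hmono (t + 1) T (by omega) (hleave t (by omega) w hw h1))
  -- Lemma C : every vertex is pebbled at some time
  have hirr : IsIrrefl V (fun a b : V => Relation.TransGen E b a) := ⟨fun v h => hacyc v h⟩
  have htr : IsTrans V (fun a b : V => Relation.TransGen E b a) :=
    ⟨fun a b c hab hbc => Relation.TransGen.trans hbc hab⟩
  have hwf : WellFounded (fun a b : V => Relation.TransGen E b a) :=
    Finite.wellFounded_of_trans_of_irrefl _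
  have hpeb : ∀ v : V, ∃ t, t ≤ T ∧ v ∈ Pf t := by
    intro v
    induction v using WellFounded.induction hwf with
    | _ x ih =>
    by_cases hx : x ∈ rootFinset E
    · exact ⟨T, le_rfl, hT ▸ hx⟩
    · have : ∃ w, E x w := by
        simp only [rootFinset, Set.Finite.mem_toFinset, Set.mem_setOf_eq] at hx
        push_neg at hx
        exact hx
      obtain ⟨w, hw⟩ := this
      obtain ⟨t, ht, hwt⟩ := ih w (Relation.TransGen.single hw)
      have hex : ∃ s, w ∈ Pf s := ⟨t, hwt⟩
      have hs1 : w ∈ Pf (Nat.find hex) := Nat.find_spec hex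
      have hsle : Nat.find hex ≤ t := Nat.find_le hwt
      have hs0 : 1 ≤ Nat.find hex := by
        rcases Nat.eq_zero_or_pos (Nat.find hex) with h | h
        · rw [h, h0] at hs1; exact absurd hs1 (Finset.notMem_empty w)
        · exact h
      have hprev : w ∉ Pf (Nat.find hex - 1) := Nat.find_min hex (by omega)
      obtain ⟨v', hv'⟩ := hstep (Nat.find hex) hs0 (le_trans hsle ht)
      rcases hv' with ⟨heq, hpred⟩ | heq
      · have hwv : w = v' := by
          rw [heq] at hs1
          rcases Finset.mem_insert.mp hs1 with h | h
          · exact h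
          · exact absurd h hprev
        exact ⟨Nat.find hex - 1, by omega, hpred x (hwv ▸ hw)⟩
      · rw [heq] at hs1
        exact absurd (Finset.mem_of_mem_erase hs1) hprev
  have hghost : ∀ v, v ∉ rootFinset E → v ∈ D T := by
    intro v hv
    obtain ⟨t, ht, hvt⟩ := hpeb v
    rcases hstay (T - t) t (by omega) v hvt with h | h
    · exact absurd (hT ▸ h) hv
    · exact h
  refine ⟨Pf, fun t => (Q ∪ D t) \ Pf t, ?_, h0, ?_, hT, ?_, hcost⟩
  · -- the spooky substrategy
    intro t h1 h2
    obtain ⟨u, rfl⟩ : ∃ u, t = u + 1 := ⟨t - 1, by omega⟩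
    simp only [Nat.add_sub_cancel]
    have hD := hDsucc u
    rw [dif_pos h2] at hD
    set v := (hstep (u + 1) (Nat.le_add_left 1 u) h2).choose with hv
    have hspec := (hstep (u + 1) (Nat.le_add_left 1 u) h2).choose_spec
    by_cases hc : Pf (u + 1) = insert v (Pf u) ∧ ∀ w, E w v → w ∈ Pf u
    · rw [if_pos hc] at hD
      by_cases hvS : v ∈ (Q ∪ D u) \ Pf u
      · -- unghost
        refine ⟨v, Or.inr (Or.inr (Or.inr ⟨hc.1, ?_, hc.2⟩))⟩
        rw [hD, hc.1]
        ext w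
        simp only [Finset.mem_sdiff, Finset.mem_insert, Finset.mem_erase, not_or]
        constructor
        · rintro ⟨hw1, hw2, hw3⟩; exact ⟨hw2, hw1, hw3⟩
        · rintro ⟨hw1, hw2, hw3⟩; exact ⟨hw2, hw1, hw3⟩
      · -- pebble
        refine ⟨v, Or.inl ⟨hc.1, ?_, hc.2⟩⟩
        rw [hD, hc.1]
        have hvS' : v ∈ Q ∪ D u → v ∈ Pf u := by
          intro h
          by_contra h2
          exact hvS (Finset.mem_sdiff.mpr ⟨h, h2⟩)
        ext w
        simp only [Finset.mem_sdiff, Finset.mem_insert, not_or]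
        constructor
        · rintro ⟨hw1, _, hw3⟩; exact ⟨hw1, hw3⟩
        · rintro ⟨hw1, hw2⟩
          refine ⟨hw1, ?_, hw2⟩
          rintro rfl
          exact hw2 (hvS' hw1)
    · -- ghost
      rw [if_neg hc] at hD
      have heq : Pf (u + 1) = (Pf u).erase v := hspec.resolve_left hc
      refine ⟨v, Or.inr (Or.inr (Or.inl ⟨heq, ?_⟩))⟩
      rw [hD, heq]
      ext w
      simp only [Finset.mem_sdiff, Finset.mem_union, Finset.mem_insert, Finset.mem_erase,
        not_and, not_not]
      rcases eq_or_ne w v with rfl | hne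
      · simp
      · constructor
        · rintro ⟨hw1, hw2⟩
          refine Or.inr ⟨?_, fun h => (hw2 hne h).elim⟩
          rcases hw1 with h | h
          · exact Or.inl h
          · rcases h with h | h
            · exact absurd h hne
            · exact Or.inr h
        · rintro (rfl | ⟨hw1, hw2⟩)
          · exact absurd rfl hne
          · refine ⟨?_, fun h hp => absurd hp hw2⟩
            rcases hw1 with h | h
            · exact Or.inl h
            · exact Or.inr (Or.inr h)
  · -- S' 0 = Q
    show (Q ∪ D 0) \ Pf 0 = Q
    rw [hD0, h0]
    simp
  · -- S' T = univ \ roots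
    show (Q ∪ D T) \ Pf T = _
    rw [hT]
    ext w
    simp only [Finset.mem_sdiff, Finset.mem_union, Finset.mem_univ, true_and]
    constructor
    · rintro ⟨_, h⟩; exact h
    · intro h; exact ⟨Or.inr (hghost w h), h⟩
end

section
/- Let P_0,P_1,…,P_T be an irreversible pebbling strategy on a finite DAG G=(V,E) with pebbling time T and pebbling cost C, and let R be the set of roots of G. Then for every subset R'⊆R there exists a spooky pebbling sub-strategy on G from (R', V∖R') to (R', ∅) with pebbling time at most (T+1)(|V|−|R'|) and pebbling cost at most C+|R'|. -/
variable {V : Type*}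

/-!
Let `τ v` be the first time the irreversible strategy pebbles `v`; acyclicity and `P T = R`
force every vertex to be pebbled, and `τ` is injective. The ghosts of `V ∖ R'` are removed in
decreasing order of `τ`. To remove the ghost of `u`, replay the strategy up to time `τ u - 1`
while keeping `R'` pebbled and ghosting instead of unpebbling (every vertex pebbled before `τ u`
is still a ghost), unghost and unpebble `u`, and ghost what the replay left behind. This costs
at most `τ u + 1 + #{w ∉ R' : τ w < τ u}` moves and never more than `C + |R'|` pebbles, and
these costs sum to at most `(T + 1) |V ∖ R'|` because `τ u + #{w ∉ R' : τ u < τ w} ≤ T`.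
-/

open Finset

theorem card_le_pebCost {P : ℕ → Finset V} {t T : ℕ} (ht : t ≤ T) :
    #(P t) ≤ pebCost P T :=
  le_sup (f := fun t => #(P t)) (mem_range.mpr (Nat.lt_succ_of_le ht))

section

variable [DecidableEq V]

/-- `SpookyReach E M a b n`: the configuration `b` (pebbles, ghosts) is reachable from `a` in at
most `n` spooky moves through configurations with at most `M` pebbles. -/
inductive SpookyReach (E : V → V → Prop) (M : ℕ) :
    Finset V × Finset V → Finset V × Finset V → ℕ → Prop
  | refl {a : Finset V × Finset V} (n : ℕ) : #a.1 ≤ M → SpookyReach E M a a n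
  | tail {a b c : Finset V × Finset V} {n : ℕ} : SpookyReach E M a b n →
      SpookyStep E b.1 c.1 b.2 c.2 → #c.1 ≤ M → SpookyReach E M a c (n + 1)

structure IsFirstPebbling (E : V → V → Prop) (P : ℕ → Finset V) (v : V) (t : ℕ) :
    Prop where
  one_le : 1 ≤ t
  eq_insert : P t = insert v (P (t - 1))
  pred_mem : ∀ w, E w v → w ∈ P (t - 1)
  not_mem : ∀ s < t, v ∉ P s

variable {E : V → V → Prop}

namespace SpookyReach

variable {M : ℕ} {a b c : Finset V × Finset V} {m n : ℕ}

theorem mono (h : SpookyReach E M a b n) (hnm : n ≤ m) : SpookyReach E M a b m := by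
  induction h generalizing m with
  | refl _ ha => exact refl m ha
  | tail _ hs hc ih =>
    obtain ⟨m, rfl⟩ : ∃ k, m = k + 1 := ⟨m - 1, by omega⟩
    exact tail (ih (by omega)) hs hc

theorem trans (h₁ : SpookyReach E M a b m) (h₂ : SpookyReach E M b c n) :
    SpookyReach E M a c (m + n) := by
  induction h₂ with
  | refl n _ => exact h₁.mono (Nat.le_add_right m n)
  | tail _ hs hc ih => exact tail ih hs hc

theorem exists_subStrategy (h : SpookyReach E M a b n) :
    ∃ (P S : ℕ → Finset V) (K : ℕ), K ≤ n ∧ IsSpookySubStrategy E P S K ∧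
      P 0 = a.1 ∧ S 0 = a.2 ∧ P K = b.1 ∧ S K = b.2 ∧ pebCost P K ≤ M := by
  induction h with
  | refl n ha =>
    refine ⟨fun _ => a.1, fun _ => a.2, 0, Nat.zero_le n, fun t _ _ => by omega,
      rfl, rfl, rfl, rfl, ?_⟩
    simpa [pebCost] using ha
  | @tail b c n _ hs hc ih =>
    obtain ⟨P, S, K, hK, hsub, hP0, hS0, hPK, hSK, hcost⟩ := ih
    refine ⟨fun t => if t ≤ K then P t else c.1, fun t => if t ≤ K then S t else c.2, K + 1,
      by omega, ?_, by simp [hP0], by simp [hS0], by simp, by simp, ?_⟩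
    · intro t ht₁ ht
      rcases ht.lt_or_eq with ht | rfl
      · simpa [Nat.le_of_lt_succ ht, show t - 1 ≤ K by omega] using hsub t ht₁ (by omega)
      · simpa [hPK, hSK] using hs
    · refine Finset.sup_le fun t ht => ?_
      by_cases htK : t ≤ K
      · simpa [htK] using (card_le_pebCost htK).trans hcost
      · simpa [htK] using hc

theorem ghost_sdiff {A S D : Finset V} (hA : #A ≤ M) (hD : D ⊆ S) :
    SpookyReach E M (A, S) (A \ D, S) #D := by
  induction D using Finset.induction_on with
  | empty => simpa using refl 0 hA
  | @insert v D hv ih =>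
    rw [card_insert_of_notMem hv, sdiff_insert]
    refine tail (ih ((subset_insert v D).trans hD)) ⟨v, Or.inr (Or.inr (Or.inl ⟨rfl, ?_⟩))⟩
      ((card_le_card (erase_subset v _)).trans ((card_le_card sdiff_subset).trans hA))
    exact (insert_eq_of_mem (hD (mem_insert_self v D))).symm

end SpookyReach

namespace IsFirstPebbling

variable {P : ℕ → Finset V} {u v : V} {t : ℕ}

theorem le_of_mem (hv : IsFirstPebbling E P v t) {s : ℕ} (hs : v ∈ P s) : t ≤ s :=
  not_lt.mp fun h => hv.not_mem s h hs

theorem not_mem_pred (hv : IsFirstPebbling E P v t) : v ∉ P (t - 1) :=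
  hv.not_mem _ (Nat.sub_lt hv.one_le one_pos)

theorem eq (hu : IsFirstPebbling E P u t) (hv : IsFirstPebbling E P v t) : u = v := by
  have hvt : v ∈ P t := by rw [hv.eq_insert]; exact mem_insert_self v _
  rw [hu.eq_insert] at hvt
  exact ((mem_insert.mp hvt).resolve_right hv.not_mem_pred).symm

end IsFirstPebbling

variable {P : ℕ → Finset V} {T M : ℕ} {R : Finset V}

theorem exists_isFirstPebbling (hP0 : P 0 = ∅)
    (hstep : ∀ t, 1 ≤ t → t ≤ T → IrrevStep E (P (t - 1)) (P t))
    {v : V} {t : ℕ} (ht : t ≤ T) (hv : v ∈ P t) : ∃ τ ≤ t, IsFirstPebbling E P v τ := by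
  have hex : ∃ s, v ∈ P s := ⟨t, hv⟩
  have hτt : Nat.find hex ≤ t := Nat.find_min' hex hv
  have hmem : v ∈ P (Nat.find hex) := Nat.find_spec hex
  have hτ₁ : 1 ≤ Nat.find hex := Nat.one_le_iff_ne_zero.mpr fun h => by simp [h, hP0] at hmem
  have hnot : v ∉ P (Nat.find hex - 1) := Nat.find_min hex (by omega)
  refine ⟨Nat.find hex, hτt, ?_⟩
  obtain ⟨w, ⟨hins, hpred⟩ | hers⟩ := hstep _ hτ₁ (hτt.trans ht)
  · obtain rfl : v = w := by
      rw [hins] at hmem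
      exact (mem_insert.mp hmem).resolve_right hnot
    exact ⟨hτ₁, hins, hpred, fun s hs => Nat.find_min hex hs⟩
  · rw [hers] at hmem
    exact absurd (mem_of_mem_erase hmem) hnot

theorem IsIrrevStrategy.exists_mem [Finite V] (hacyc : Acyclic E) (h : IsIrrevStrategy E P T)
    (v : V) : ∃ t ≤ T, v ∈ P t := by
  obtain ⟨hP0, hPT, hstep⟩ := h
  have hwf : WellFounded (Function.swap E) := by
    have : Std.Irrefl (Relation.TransGen (Function.swap E)) :=
      ⟨fun v h => hacyc v (Relation.transGen_swap.mp h)⟩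
    exact Subrelation.wf Relation.TransGen.single (Finite.wellFounded_of_trans_of_irrefl _)
  induction v using hwf.induction with
  | _ v ih =>
  by_cases hroot : ∀ w, ¬ E v w
  · exact ⟨T, le_rfl, by simpa [hPT, rootFinset] using hroot⟩
  · push Not at hroot
    obtain ⟨w, hw⟩ := hroot
    obtain ⟨t, ht, hwt⟩ := ih w hw
    obtain ⟨τ, hτ, hfirst⟩ := exists_isFirstPebbling hP0 hstep ht hwt
    exact ⟨τ - 1, by omega, hfirst.pred_mem v hw⟩

/-- Replaying an irreversible move while keeping `R` pebbled: removing a pebble outside `R` becomes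
a ghost move, removing one of `R` is skipped. -/
theorem IrrevStep.union_eq_or_spookyStep {A B S : Finset V} (h : IrrevStep E A B)
    (hS : A \ R ⊆ S) : B ∪ R = A ∪ R ∨ SpookyStep E (A ∪ R) (B ∪ R) S S := by
  obtain ⟨v, ⟨rfl, hpred⟩ | rfl⟩ := h
  · exact Or.inr
      ⟨v, Or.inl ⟨insert_union v A R, rfl, fun w hw => mem_union_left R (hpred w hw)⟩⟩
  · by_cases hv : v ∈ A \ R
    · refine Or.inr ⟨v, Or.inr (Or.inr (Or.inl ⟨?_, (insert_eq_of_mem (hS hv)).symm⟩))⟩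
      rw [erase_union_distrib, erase_eq_of_notMem (mem_sdiff.mp hv).2]
    · left
      ext x
      by_cases hx : x = v <;> simp_all

theorem spookyReach_replay {S : Finset V}
    (hstep : ∀ t, 1 ≤ t → t ≤ T → IrrevStep E (P (t - 1)) (P t))
    (hM : ∀ t ≤ T, #(P t ∪ R) ≤ M) {t : ℕ} (ht : t ≤ T)
    (hS : ∀ s < t, P s \ R ⊆ S) :
    SpookyReach E M (P 0 ∪ R, S) (P t ∪ R, S) t := by
  induction t with
  | zero => exact .refl 0 (hM 0 ht)
  | succ t ih =>
    have hreach := ih (by omega) fun s hs => hS s (by omega)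
    rcases (hstep (t + 1) (by omega) ht).union_eq_or_spookyStep (hS t (by omega)) with heq | hs
    · exact heq ▸ hreach.mono (Nat.le_succ t)
    · exact hreach.tail hs (hM _ ht)

theorem spookyReach_erase_ghost (hP0 : P 0 = ∅)
    (hstep : ∀ t, 1 ≤ t → t ≤ T → IrrevStep E (P (t - 1)) (P t))
    (hM : ∀ t ≤ T, #(P t ∪ R) ≤ M) {u : V} {τ : ℕ} (hu : IsFirstPebbling E P u τ)
    (hτ : τ ≤ T) (huR : u ∉ R) {D : Finset V} (hD : ∀ s < τ, P s \ R ⊆ D) :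
    SpookyReach E M (R, D) (R, D.erase u) (τ + 1 + #(P (τ - 1) \ R)) := by
  have hreplay : SpookyReach E M (R, D) (P (τ - 1) ∪ R, D) (τ - 1) := by
    simpa [hP0] using spookyReach_replay hstep hM (by omega) fun s hs => hD s (by omega)
  have hunghost : SpookyStep E (P (τ - 1) ∪ R) (P τ ∪ R) D (D.erase u) :=
    ⟨u, Or.inr (Or.inr (Or.inr ⟨by rw [hu.eq_insert, insert_union], rfl,
      fun w hw => mem_union_left R (hu.pred_mem w hw)⟩))⟩
  have hunpebble : SpookyStep E (P τ ∪ R) (P (τ - 1) ∪ R) (D.erase u) (D.erase u) := by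
    refine ⟨u, Or.inr (Or.inl ⟨?_, rfl, fun w hw => ?_⟩)⟩
    · rw [hu.eq_insert, insert_union, erase_insert (by simp [hu.not_mem_pred, huR])]
    · rw [hu.eq_insert]
      exact mem_union_left R (mem_insert_of_mem (hu.pred_mem w hw))
  have hleftover : P (τ - 1) \ R ⊆ D.erase u := fun x hx =>
    mem_erase.mpr ⟨fun hxu => hu.not_mem_pred (hxu ▸ (mem_sdiff.mp hx).1),
      hD (τ - 1) (by have := hu.one_le; omega) hx⟩
  have hcleared : (P (τ - 1) ∪ R) \ (P (τ - 1) \ R) = R := by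
    ext x
    simp only [mem_sdiff, mem_union]
    tauto
  have hteardown := SpookyReach.ghost_sdiff (E := E) (hM (τ - 1) (by omega)) hleftover
  rw [hcleared] at hteardown
  have hround : SpookyReach E M (R, D) (P (τ - 1) ∪ R, D.erase u) (τ - 1 + 1 + 1) :=
    (hreplay.tail (c := (P τ ∪ R, D.erase u)) hunghost (hM τ hτ)).tail hunpebble
      (hM (τ - 1) (by omega))
  exact (hround.trans hteardown).mono (by have := hu.one_le; omega)

theorem spookyReach_clear_ghosts (hP0 : P 0 = ∅)
    (hstep : ∀ t, 1 ≤ t → t ≤ T → IrrevStep E (P (t - 1)) (P t))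
    (hM : ∀ t ≤ T, #(P t ∪ R) ≤ M) {τ : V → ℕ} (hτT : ∀ v, τ v ≤ T)
    (hτ : ∀ v, IsFirstPebbling E P v (τ v)) (D : Finset V) (hDR : Disjoint D R)
    (hclosed : ∀ v ∈ D, ∀ w ∉ R, τ w ≤ τ v → w ∈ D) :
    SpookyReach E M (R, D) (R, ∅) (∑ u ∈ D, (τ u + 1 + #{w ∈ D | τ w < τ u})) := by
  induction D using Finset.strongInduction with
  | _ D ih =>
  rcases D.eq_empty_or_nonempty with rfl | hne
  · exact .refl _ (by simpa [hP0] using hM 0 (Nat.zero_le T))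
  obtain ⟨u, huD, humax⟩ := exists_max_image D τ hne
  have hdirty : ∀ s < τ u, P s \ R ⊆ D := fun s hs x hx =>
    hclosed u huD x (mem_sdiff.mp hx).2 (((hτ x).le_of_mem (mem_sdiff.mp hx).1).trans hs.le)
  have hfirst := spookyReach_erase_ghost hP0 hstep hM (hτ u) (hτT u)
    (disjoint_left.mp hDR huD) hdirty
  have hleftover : #(P (τ u - 1) \ R) ≤ #{w ∈ D | τ w < τ u} := by
    refine card_le_card fun x hx => mem_filter.mpr ⟨hdirty (τ u - 1) ?_ hx, ?_⟩
    · have := (hτ u).one_le; omega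
    · have := (hτ x).le_of_mem (mem_sdiff.mp hx).1; have := (hτ u).one_le; omega
  have hclosed' : ∀ v ∈ D.erase u, ∀ w ∉ R, τ w ≤ τ v → w ∈ D.erase u := by
    intro v hv w hwR hwv
    refine mem_erase.mpr ⟨fun hwu => ?_, hclosed v (mem_of_mem_erase hv) w hwR hwv⟩
    have hτv : τ v = τ u := le_antisymm (humax v (mem_of_mem_erase hv)) (hwu ▸ hwv)
    exact ne_of_mem_erase hv ((hτ v).eq (by rw [hτv]; exact hτ u))
  have hrest := ih (D.erase u) (erase_ssubset huD)
    (disjoint_of_subset_left (erase_subset u D) hDR) hclosed'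
  rw [← add_sum_erase D _ huD]
  refine (hfirst.mono (by omega)).trans (hrest.mono (sum_le_sum fun x _ => ?_))
  gcongr
  exact erase_subset u D

end

theorem sum_add_card_filter_lt_le {ι : Type*} (U : Finset ι) {τ : ι → ℕ} {T : ℕ}
    (hle : ∀ u ∈ U, τ u ≤ T) (hinj : Set.InjOn τ U) :
    ∑ u ∈ U, (τ u + 1 + #{w ∈ U | τ w < τ u}) ≤ (T + 1) * #U := by
  have habove : ∀ u ∈ U, τ u + #{w ∈ U | τ u < τ w} ≤ T := fun u hu => by
    have : #{w ∈ U | τ u < τ w} ≤ #(Ioc (τ u) T) :=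
      card_le_card_of_injOn τ
        (fun w hw => mem_Ioc.mpr ⟨(mem_filter.mp hw).2, hle w (mem_filter.mp hw).1⟩)
        (hinj.mono fun w hw => (mem_filter.mp hw).1)
    rw [Nat.card_Ioc] at this
    have := hle u hu
    omega
  have hswap : ∑ u ∈ U, #{w ∈ U | τ w < τ u} = ∑ u ∈ U, #{w ∈ U | τ u < τ w} := by
    simp only [card_filter]
    exact sum_comm
  calc ∑ u ∈ U, (τ u + 1 + #{w ∈ U | τ w < τ u})
      = ∑ u ∈ U, (τ u + #{w ∈ U | τ u < τ w}) + #U := by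
        simp only [sum_add_distrib, hswap, sum_const, smul_eq_mul, mul_one]
        ring
    _ ≤ ∑ _u ∈ U, T + #U := by gcongr with u hu; exact habove u hu
    _ = (T + 1) * #U := by simp only [sum_const, smul_eq_mul]; ring

theorem spooky_sub_cleaning_general {V : Type*} [Fintype V] [DecidableEq V] (E : V → V → Prop)
    (hacyc : Acyclic E) (Pf : ℕ → Finset V) (T C : ℕ)
    (hstrat : IsIrrevStrategy E Pf T) (hcost : pebCost Pf T = C)
    (R' : Finset V) :
    ∃ (P' S' : ℕ → Finset V) (K : ℕ),
      IsSpookySubStrategy E P' S' K ∧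
      P' 0 = R' ∧ S' 0 = Finset.univ \ R' ∧
      P' K = R' ∧ S' K = ∅ ∧
      K ≤ (T + 1) * (Fintype.card V - R'.card) ∧
      pebCost P' K ≤ C + R'.card := by
  have hM : ∀ t ≤ T, #(Pf t ∪ R') ≤ C + #R' := fun t ht =>
    (card_union_le _ _).trans (Nat.add_le_add_right (hcost ▸ card_le_pebCost ht) _)
  have hfirst : ∀ v, ∃ τ ≤ T, IsFirstPebbling E Pf v τ := fun v => by
    obtain ⟨t, ht, hv⟩ := hstrat.exists_mem hacyc v
    obtain ⟨τ, hτt, hτ⟩ := exists_isFirstPebbling hstrat.1 hstrat.2.2 ht hv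
    exact ⟨τ, hτt.trans ht, hτ⟩
  choose τ hτT hτ using hfirst
  have hclean := spookyReach_clear_ghosts hstrat.1 hstrat.2.2 hM hτT hτ (univ \ R')
    sdiff_disjoint fun _ _ w hw _ => mem_sdiff.mpr ⟨mem_univ w, hw⟩
  have hbound := sum_add_card_filter_lt_le (univ \ R') (fun u _ => hτT u)
    fun u _ v _ huv => (hτ u).eq (huv ▸ hτ v)
  obtain ⟨P', S', K, hK, hsub, hP'0, hS'0, hP'K, hS'K, hcost'⟩ :=
    (hclean.mono hbound).exists_subStrategy
  rw [card_sdiff_of_subset (subset_univ R'), card_univ] at hK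
  exact ⟨P', S', K, hsub, hP'0, hS'0, hP'K, hS'K, hK, hcost'⟩

/-- From an irreversible pebbling strategy with time `T` and cost `C`,
for every subset `R'` of the roots there is a spooky pebbling sub-strategy from
`(R', V∖R')` to `(R', ∅)` with pebbling time at most `(T+1)(|V|-|R'|)` and pebbling
cost at most `C + |R'|`. -/
theorem spooky_sub_cleaning {V : Type*} [Fintype V] [DecidableEq V] (E : V → V → Prop)
    (hacyc : Acyclic E) (Pf : ℕ → Finset V) (T C : ℕ)
    (hstrat : IsIrrevStrategy E Pf T) (hcost : pebCost Pf T = C)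
    (R' : Finset V) (hR' : R' ⊆ rootFinset E) :
    ∃ (P' S' : ℕ → Finset V) (K : ℕ),
      IsSpookySubStrategy E P' S' K ∧
      P' 0 = R' ∧ S' 0 = Finset.univ \ R' ∧
      P' K = R' ∧ S' K = ∅ ∧
      K ≤ (T + 1) * (Fintype.card V - R'.card) ∧
      pebCost P' K ≤ C + R'.card :=
  spooky_sub_cleaning_general E hacyc Pf T C hstrat hcost R'
end

section
/- For every integer P≥2, every irreversible pebbling strategy on the grid DAG G◇_P has pebbling cost at least P+1. -/
variable {V : Type*}

namespace GridLB

/-- total vertex constructor -/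
def fvtx (P : ℕ) (hP : 0 < P) (a b : ℕ) : Fin P × Fin P :=
  (⟨a % P, Nat.mod_lt _ hP⟩, ⟨b % P, Nat.mod_lt _ hP⟩)

lemma fvtx_fst {P : ℕ} (hP : 0 < P) {a : ℕ} (b : ℕ) (ha : a < P) :
    ((fvtx P hP a b).1 : ℕ) = a := Nat.mod_eq_of_lt ha

lemma fvtx_snd {P : ℕ} (hP : 0 < P) (a : ℕ) {b : ℕ} (hb : b < P) :
    ((fvtx P hP a b).2 : ℕ) = b := Nat.mod_eq_of_lt hb

lemma fvtx_swap {P : ℕ} (hP : 0 < P) (a b : ℕ) :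
    Prod.swap (fvtx P hP a b) = fvtx P hP b a := rfl

lemma gridE_row_pred {P : ℕ} (hP : 0 < P) {a b : ℕ} (ha : a < P) (hb : b < P) (ha1 : 1 ≤ a) :
    gridE P (fvtx P hP (a-1) b) (fvtx P hP a b) := by
  left
  constructor
  · rw [fvtx_fst hP b ha, fvtx_fst hP b (by omega)]; omega
  · rfl

lemma gridE_col_pred {P : ℕ} (hP : 0 < P) {a b : ℕ} (ha : a < P) (hb : b < P) (hb1 : 1 ≤ b) :
    gridE P (fvtx P hP a (b-1)) (fvtx P hP a b) := by
  right
  constructor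
  · rfl
  · rw [fvtx_snd hP a hb, fvtx_snd hP a (by omega)]; omega

lemma gridE_swap {P : ℕ} {a b : Fin P × Fin P} (h : gridE P a b) :
    gridE P (Prod.swap a) (Prod.swap b) := by
  rcases h with ⟨h1, h2⟩ | ⟨h1, h2⟩
  · exact Or.inr ⟨h2, h1⟩
  · exact Or.inl ⟨h2, h1⟩

/-- one placement step analysis -/
lemma placeStep {P T : ℕ} {Pf : ℕ → Finset (Fin P × Fin P)}
    (hstep : ∀ t, 1 ≤ t → t ≤ T → IrrevStep (gridE P) (Pf (t - 1)) (Pf t))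
    {t : ℕ} (h1 : 1 ≤ t) (h2 : t ≤ T) {v : Fin P × Fin P}
    (h3 : v ∉ Pf (t - 1)) (h4 : v ∈ Pf t) :
    Pf t = insert v (Pf (t - 1)) ∧ ∀ w, gridE P w v → w ∈ Pf (t - 1) := by
  obtain ⟨u, hu | hu⟩ := hstep t h1 h2
  · obtain ⟨hB, hpred⟩ := hu
    have hvu : v = u := by
      by_contra hne
      rw [hB] at h4
      rcases Finset.mem_insert.1 h4 with h | h
      · exact hne h
      · exact h3 h
    subst hvu; exact ⟨hB, hpred⟩
  · rw [hu] at h4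
    exact absurd (Finset.mem_of_mem_erase h4) h3

/-- last placement with persistence -/
lemma lastPlace {α : Type*} [DecidableEq α] (Pf : ℕ → Finset α) (v : α) (a b : ℕ)
    (hab : a ≤ b) (ha : v ∉ Pf a) (hb : v ∈ Pf b) :
    ∃ s, a < s ∧ s ≤ b ∧ v ∉ Pf (s - 1) ∧ ∀ r, s ≤ r → r ≤ b → v ∈ Pf r := by
  classical
  set Pr : ℕ → Prop := fun r => v ∉ Pf r ∧ a ≤ r with hPr
  haveI : DecidablePred Pr := Classical.decPred _
  have hPa : Pr a := ⟨ha, le_refl a⟩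
  have hspec : Pr (Nat.findGreatest Pr b) := Nat.findGreatest_spec hab hPa
  have hle : Nat.findGreatest Pr b ≤ b := Nat.findGreatest_le b
  have hs0b : Nat.findGreatest Pr b ≠ b := by
    intro h; rw [h] at hspec; exact hspec.1 hb
  have hs0a : a ≤ Nat.findGreatest Pr b := hspec.2
  refine ⟨Nat.findGreatest Pr b + 1, by omega, by omega, by simpa using hspec.1, ?_⟩
  intro r h1 h2
  by_contra hvr
  exact absurd (show Pr r from ⟨hvr, by omega⟩)
    (Nat.findGreatest_is_greatest (P := Pr) (by omega) h2)

/-- counting: disjoint union -/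
lemma count_disj {α : Type*} [DecidableEq α] (S A B : Finset α) (h : Disjoint A B) :
    (S ∩ A).card + (S ∩ B).card ≤ (S ∩ (A ∪ B)).card := by
  rw [Finset.inter_union_distrib_left,
    Finset.card_union_of_disjoint (h.mono Finset.inter_subset_right Finset.inter_subset_right)]

/-- counting: disjoint family -/
lemma count_biUnion {α : Type*} [DecidableEq α] (S : Finset α) (s : Finset ℕ) (f : ℕ → Finset α)
    (hdisj : ∀ a ∈ s, ∀ b ∈ s, a ≠ b → Disjoint (f a) (f b))
    (hne : ∀ k ∈ s, (S ∩ f k).Nonempty) :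
    s.card ≤ (S ∩ s.biUnion f).card := by
  have h1 : (s.biUnion fun k => S ∩ f k) ⊆ S ∩ s.biUnion f := by
    intro x hx
    simp only [Finset.mem_biUnion, Finset.mem_inter] at hx ⊢
    obtain ⟨k, hk, hx1, hx2⟩ := hx
    exact ⟨hx1, k, hk, hx2⟩
  have h2 : (s.biUnion fun k => S ∩ f k).card = ∑ k ∈ s, (S ∩ f k).card :=
    Finset.card_biUnion (fun a ha b hb hab =>
      (hdisj a ha b hb hab).mono Finset.inter_subset_right Finset.inter_subset_right)
  calc s.card = ∑ _k ∈ s, 1 := by simp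
    _ ≤ ∑ k ∈ s, (S ∩ f k).card := Finset.sum_le_sum (fun k hk => Finset.card_pos.2 (hne k hk))
    _ = (s.biUnion fun k => S ∩ f k).card := h2.symm
    _ ≤ _ := Finset.card_le_card h1

/-- swap a strategy -/
lemma swap_step {P T : ℕ} {Pf : ℕ → Finset (Fin P × Fin P)}
    (hstep : ∀ t, 1 ≤ t → t ≤ T → IrrevStep (gridE P) (Pf (t - 1)) (Pf t)) :
    ∀ t, 1 ≤ t → t ≤ T →
      IrrevStep (gridE P) ((Pf (t - 1)).image Prod.swap) ((Pf t).image Prod.swap) := by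
  intro t h1 h2
  obtain ⟨u, hu | hu⟩ := hstep t h1 h2
  · refine ⟨Prod.swap u, Or.inl ⟨?_, ?_⟩⟩
    · rw [hu.1, Finset.image_insert]
    · intro w hw
      have hw' : Prod.swap w ∈ Pf (t-1) := by
        apply hu.2
        have := gridE_swap hw
        simpa using this
      exact Finset.mem_image.2 ⟨Prod.swap w, hw', Prod.swap_swap w⟩
  · exact ⟨Prod.swap u, Or.inr (by rw [hu, Finset.image_erase Prod.swap_injective])⟩

end GridLB

namespace GridLB

def coneF (P : ℕ) (i j : ℕ) : Finset (Fin P × Fin P) :=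
  Finset.univ.filter (fun v => (v.1 : ℕ) ≤ i ∧ (v.2 : ℕ) ≤ j)

def rowSegF (P : ℕ) (i j : ℕ) : Finset (Fin P × Fin P) :=
  Finset.univ.filter (fun v => (v.1 : ℕ) = i ∧ (v.2 : ℕ) ≤ j)

def colSegF (P : ℕ) (i j : ℕ) : Finset (Fin P × Fin P) :=
  Finset.univ.filter (fun v => (v.1 : ℕ) ≤ i ∧ (v.2 : ℕ) = j)

@[simp] lemma mem_coneF {P i j : ℕ} {v : Fin P × Fin P} :
    v ∈ coneF P i j ↔ (v.1 : ℕ) ≤ i ∧ (v.2 : ℕ) ≤ j := by simp [coneF]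

@[simp] lemma mem_rowSegF {P i j : ℕ} {v : Fin P × Fin P} :
    v ∈ rowSegF P i j ↔ (v.1 : ℕ) = i ∧ (v.2 : ℕ) ≤ j := by simp [rowSegF]

@[simp] lemma mem_colSegF {P i j : ℕ} {v : Fin P × Fin P} :
    v ∈ colSegF P i j ↔ (v.1 : ℕ) ≤ i ∧ (v.2 : ℕ) = j := by simp [colSegF]

lemma image_coneF {P : ℕ} (i j : ℕ) :
    (coneF P i j).image Prod.swap = coneF P j i := by
  ext v
  simp only [Finset.mem_image, mem_coneF]
  constructor
  · rintro ⟨u, ⟨h1, h2⟩, rfl⟩; exact ⟨h2, h1⟩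
  · rintro ⟨h1, h2⟩
    exact ⟨Prod.swap v, ⟨h2, h1⟩, Prod.swap_swap v⟩

/-- the staircase of last placements along a row segment -/
lemma staircase {P T : ℕ} {Pf : ℕ → Finset (Fin P × Fin P)} (hP : 0 < P)
    (hstep : ∀ t, 1 ≤ t → t ≤ T → IrrevStep (gridE P) (Pf (t - 1)) (Pf t))
    {i j γ δ : ℕ} (hi : i < P) (hj : j < P) (hγδ : γ ≤ δ) (hδT : δ ≤ T)
    (hrow : ∀ c, c ≤ j → fvtx P hP i c ∉ Pf γ)
    (htar : fvtx P hP i j ∈ Pf δ) :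
    ∃ σ : ℕ → ℕ,
      (∀ c, c ≤ j → γ < σ c ∧ σ c ≤ δ ∧ fvtx P hP i c ∉ Pf (σ c - 1) ∧
        fvtx P hP i c ∈ Pf (σ c)) ∧
      (∀ c, c < j → σ c < σ (c + 1) ∧
        ∀ r, σ c ≤ r → r ≤ σ (c + 1) - 1 → fvtx P hP i c ∈ Pf r) := by
  have key : ∀ k, k ≤ j → ∃ σ : ℕ → ℕ,
      (∀ c, j - k ≤ c → c ≤ j → γ < σ c ∧ σ c ≤ δ ∧ fvtx P hP i c ∉ Pf (σ c - 1) ∧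
        fvtx P hP i c ∈ Pf (σ c)) ∧
      (∀ c, j - k ≤ c → c < j → σ c < σ (c + 1) ∧
        ∀ r, σ c ≤ r → r ≤ σ (c + 1) - 1 → fvtx P hP i c ∈ Pf r) := by
    intro k
    induction k with
    | zero =>
      intro _
      obtain ⟨s, hs1, hs2, hs3, hs4⟩ := lastPlace Pf (fvtx P hP i j) γ δ hγδ (hrow j le_rfl) htar
      refine ⟨fun _ => s, ?_, ?_⟩
      · intro c hc1 hc2
        have hcj : c = j := by omega
        subst hcj
        exact ⟨hs1, hs2, hs3, hs4 s le_rfl hs2⟩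
      · intro c hc1 hc2; omega
    | succ m ihm =>
      intro hm
      obtain ⟨σ, hA, hB⟩ := ihm (by omega)
      have hc1j : (j - (m+1)) + 1 ≤ j := by omega
      have hjm : j - m = (j - (m+1)) + 1 := by omega
      obtain ⟨h1, h2, h3, h4⟩ := hA ((j - (m+1)) + 1) (by omega) hc1j
      have hpl := placeStep hstep (t := σ ((j - (m+1)) + 1)) (by omega) (by omega) h3 h4
      have hpredmem : fvtx P hP i (j - (m+1)) ∈ Pf (σ ((j - (m+1)) + 1) - 1) := by
        apply hpl.2
        exact gridE_col_pred hP hi (by omega) (by omega)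
      obtain ⟨s, hs1, hs2, hs3, hs4⟩ := lastPlace Pf (fvtx P hP i (j - (m+1))) γ
        (σ ((j - (m+1)) + 1) - 1) (by omega) (hrow _ (by omega)) hpredmem
      refine ⟨Function.update σ (j - (m+1)) s, ?_, ?_⟩
      · intro c hcl hcu
        by_cases hc : c = j - (m+1)
        · subst hc
          rw [Function.update_self]
          exact ⟨hs1, by omega, hs3, hs4 s le_rfl hs2⟩
        · rw [Function.update_of_ne hc]
          exact hA c (by omega) hcu
      · intro c hcl hcu
        by_cases hc : c = j - (m+1)
        · subst hc
          rw [Function.update_self, Function.update_of_ne (by omega)]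
          refine ⟨by omega, ?_⟩
          intro r hr1 hr2
          exact hs4 r hr1 hr2
        · rw [Function.update_of_ne hc, Function.update_of_ne (by omega)]
          exact hB c (by omega) hcu
  obtain ⟨σ, hA, hB⟩ := key j le_rfl
  exact ⟨σ, fun c hc => hA c (by omega) hc, fun c hc => hB c (by omega) hc⟩

end GridLB

namespace GridLB

lemma master (P T : ℕ) (hP : 0 < P) :
    ∀ (n : ℕ) (Pf : ℕ → Finset (Fin P × Fin P)),
      (∀ t, 1 ≤ t → t ≤ T → IrrevStep (gridE P) (Pf (t - 1)) (Pf t)) →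
      ∀ (i j : ℕ), i < P → j < P → i + j ≤ n → 0 < i + j →
      ∀ (γ δ q : ℕ) (Q : Finset (Fin P × Fin P)),
        γ ≤ δ → δ ≤ T →
        (∀ v ∈ Q, ¬((v.1 : ℕ) ≤ i ∧ (v.2 : ℕ) ≤ j)) →
        (∀ t, γ ≤ t → t ≤ δ → q ≤ ((Pf t) ∩ Q).card) →
        (∀ v ∈ Pf γ, ¬((v.1 : ℕ) = i ∧ (v.2 : ℕ) ≤ j)) →
        fvtx P hP i j ∈ Pf δ →
        ∃ t, γ < t ∧ t ≤ δ ∧ min i j + 2 + q ≤ ((Pf t) ∩ (coneF P i j ∪ Q)).card := by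
  intro n
  induction n with
  | zero =>
    intro Pf _ i j _ _ hsum hpos
    omega
  | succ n ih =>
    intro Pf hstep i j hi hj hsum hpos γ δ q Q hγδ hδT hQcone hQcard hempty htar
    have hQdisj : Disjoint (coneF P i j) Q :=
      Finset.disjoint_left.2 (fun v hv hvQ => hQcone v hvQ (mem_coneF.1 hv))
    have htarγ : fvtx P hP i j ∉ Pf γ := fun h =>
      hempty _ h ⟨fvtx_fst hP j hi, by rw [fvtx_snd hP i hj]⟩
    by_cases hj0 : j = 0
    · -- base: single column
      subst hj0
      have hi1 : 1 ≤ i := by omega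
      obtain ⟨s, hs1, hs2, hs3, hs4⟩ := lastPlace Pf _ γ δ hγδ htarγ htar
      obtain ⟨hins, hpred⟩ := placeStep hstep (by omega) (by omega) hs3 (hs4 s le_rfl hs2)
      have hpredmem : fvtx P hP (i-1) 0 ∈ Pf s := by
        rw [hins]
        exact Finset.mem_insert_of_mem (hpred _ (gridE_row_pred hP hi hP hi1))
      refine ⟨s, hs1, hs2, ?_⟩
      have hpair : ({fvtx P hP i 0, fvtx P hP (i-1) 0} : Finset (Fin P × Fin P)) ⊆
          Pf s ∩ coneF P i 0 := by
        intro v hv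
        rcases Finset.mem_insert.1 hv with rfl | hv
        · exact Finset.mem_inter.2 ⟨hs4 s le_rfl hs2, mem_coneF.2
            ⟨by rw [fvtx_fst hP 0 hi], by rw [fvtx_snd hP i hP]⟩⟩
        · rw [Finset.mem_singleton.1 hv]
          exact Finset.mem_inter.2 ⟨hpredmem, mem_coneF.2
            ⟨by rw [fvtx_fst hP 0 (show i-1 < P by omega)]; omega,
             by rw [fvtx_snd hP (i-1) hP]⟩⟩
      have hne : fvtx P hP i 0 ≠ fvtx P hP (i-1) 0 := by
        intro h
        have := congrArg (fun v => ((v : Fin P × Fin P).1 : ℕ)) h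
        simp only [fvtx_fst hP 0 hi, fvtx_fst hP 0 (show i-1 < P by omega)] at this
        omega
      have h2 : 2 ≤ (Pf s ∩ coneF P i 0).card := by
        calc 2 = ({fvtx P hP i 0, fvtx P hP (i-1) 0} : Finset (Fin P × Fin P)).card :=
            (Finset.card_pair hne).symm
          _ ≤ _ := Finset.card_le_card hpair
      have h3 := hQcard s (by omega) hs2
      have h4 := count_disj (Pf s) (coneF P i 0) Q hQdisj
      have h5 : min i 0 = 0 := by omega
      omega
    by_cases hi0 : i = 0
    · -- base: single row
      subst hi0
      have hj1 : 1 ≤ j := by omega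
      obtain ⟨s, hs1, hs2, hs3, hs4⟩ := lastPlace Pf _ γ δ hγδ htarγ htar
      obtain ⟨hins, hpred⟩ := placeStep hstep (by omega) (by omega) hs3 (hs4 s le_rfl hs2)
      have hpredmem : fvtx P hP 0 (j-1) ∈ Pf s := by
        rw [hins]
        exact Finset.mem_insert_of_mem (hpred _ (gridE_col_pred hP hP hj hj1))
      refine ⟨s, hs1, hs2, ?_⟩
      have hpair : ({fvtx P hP 0 j, fvtx P hP 0 (j-1)} : Finset (Fin P × Fin P)) ⊆
          Pf s ∩ coneF P 0 j := by
        intro v hv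
        rcases Finset.mem_insert.1 hv with rfl | hv
        · exact Finset.mem_inter.2 ⟨hs4 s le_rfl hs2, mem_coneF.2
            ⟨by rw [fvtx_fst hP j hP], by rw [fvtx_snd hP 0 hj]⟩⟩
        · rw [Finset.mem_singleton.1 hv]
          exact Finset.mem_inter.2 ⟨hpredmem, mem_coneF.2
            ⟨by rw [fvtx_fst hP (j-1) hP],
             by rw [fvtx_snd hP 0 (show j-1 < P by omega)]; omega⟩⟩
      have hne : fvtx P hP 0 j ≠ fvtx P hP 0 (j-1) := by
        intro h
        have := congrArg (fun v => ((v : Fin P × Fin P).2 : ℕ)) h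
        simp only [fvtx_snd hP 0 hj, fvtx_snd hP 0 (show j-1 < P by omega)] at this
        omega
      have h2 : 2 ≤ (Pf s ∩ coneF P 0 j).card := by
        calc 2 = ({fvtx P hP 0 j, fvtx P hP 0 (j-1)} : Finset (Fin P × Fin P)).card :=
            (Finset.card_pair hne).symm
          _ ≤ _ := Finset.card_le_card hpair
      have h3 := hQcard s (by omega) hs2
      have h4 := count_disj (Pf s) (coneF P 0 j) Q hQdisj
      have h5 : min 0 j = 0 := by omega
      omega
    -- main case : i ≥ 1, j ≥ 1
    have hi1 : 1 ≤ i := by omega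
    have hj1 : 1 ≤ j := by omega
    obtain ⟨σ, hσ1, hσ2⟩ := staircase hP hstep hi hj hγδ hδT
      (fun c hc => fun hmem => hempty _ hmem
        ⟨fvtx_fst hP c hi, by rw [fvtx_snd hP i (by omega)]; exact hc⟩) htar
    -- strict monotonicity with gaps
    have hstrict : ∀ c d, c + d ≤ j → σ c + d ≤ σ (c + d) := by
      intro c d
      induction d with
      | zero => simp
      | succ m ihm =>
        intro h
        have h1 := ihm (by omega)
        have h2 := (hσ2 (c+m) (by omega)).1
        have h3 : c + (m+1) = (c + m) + 1 := by omega
        rw [h3]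
        omega
    -- supports
    have hsupp : ∀ c, c ≤ j →
        fvtx P hP (i-1) c ∈ Pf (σ c - 1) ∧ fvtx P hP (i-1) c ∈ Pf (σ c) := by
      intro c hc
      obtain ⟨h1, h2, h3, h4⟩ := hσ1 c hc
      obtain ⟨hins, hpred⟩ := placeStep hstep (by omega) (by omega) h3 h4
      have hm : fvtx P hP (i-1) c ∈ Pf (σ c - 1) :=
        hpred _ (gridE_row_pred hP hi (by omega) hi1)
      exact ⟨hm, by rw [hins]; exact Finset.mem_insert_of_mem hm⟩
    -- row coverage
    have hcover : ∀ t, σ 0 ≤ t → t ≤ σ j → ((Pf t) ∩ rowSegF P i j).Nonempty := by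
      have aux : ∀ c, c ≤ j → ∀ t, σ 0 ≤ t → t ≤ σ c → ((Pf t) ∩ rowSegF P i j).Nonempty := by
        intro c
        induction c with
        | zero =>
          intro _ t h1 h2
          have ht : t = σ 0 := by omega
          subst ht
          exact ⟨fvtx P hP i 0, Finset.mem_inter.2 ⟨(hσ1 0 (by omega)).2.2.2, mem_rowSegF.2
            ⟨fvtx_fst hP 0 hi, by rw [fvtx_snd hP i hP]; omega⟩⟩⟩
        | succ m ihm =>
          intro hc t h1 h2
          by_cases hle : t ≤ σ m
          · exact ihm (by omega) t h1 hle
          · by_cases heq : t = σ (m+1)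
            · subst heq
              exact ⟨fvtx P hP i (m+1), Finset.mem_inter.2 ⟨(hσ1 (m+1) hc).2.2.2, mem_rowSegF.2
                ⟨fvtx_fst hP (m+1) hi, by rw [fvtx_snd hP i (show m+1 < P by omega)]; omega⟩⟩⟩
            · have hpres := (hσ2 m (by omega)).2 t (by omega) (by omega)
              exact ⟨fvtx P hP i m, Finset.mem_inter.2 ⟨hpres, mem_rowSegF.2
                ⟨fvtx_fst hP m hi, by rw [fvtx_snd hP i (show m < P by omega)]; omega⟩⟩⟩
      intro t h1 h2
      exact aux j le_rfl t h1 h2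
    have hσ0γ : γ < σ 0 := (hσ1 0 (by omega)).1
    have hσjδ : σ j ≤ δ := (hσ1 j le_rfl).2.1
    have hσ0j : ∀ c, c ≤ j → σ 0 + c ≤ σ c := fun c hc => by
      have h := hstrict 0 c (by omega)
      simpa using h
    have hσupp : ∀ c c', c ≤ c' → c' ≤ j → σ c + (c' - c) ≤ σ c' := by
      intro c c' h1 h2
      have h := hstrict c (c' - c) (by omega)
      have heq : c + (c' - c) = c' := by omega
      rwa [heq] at h
    classical
    set Pe : ℕ → Prop := fun c' => ∃ r, σ 0 ≤ r ∧ r ≤ σ c' - 2 ∧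
      ∀ v ∈ Pf r, ¬((v.1 : ℕ) ≤ i - 1 ∧ (v.2 : ℕ) = c') with hPe
    haveI : DecidablePred Pe := Classical.decPred _
    by_cases hex : ∃ c', c' ≤ j ∧ Pe c'
    · -- Case A: recursive call on the transposed strategy
      obtain ⟨c₀, hc₀j, hc₀⟩ := hex
      have hcstar : Pe (Nat.findGreatest Pe j) := Nat.findGreatest_spec hc₀j hc₀
      set cs := Nat.findGreatest Pe j with hcs
      have hcsj : cs ≤ j := Nat.findGreatest_le j
      have hcsmax : ∀ y, cs < y → y ≤ j → ¬ Pe y := fun y h1 h2 =>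
        Nat.findGreatest_is_greatest (P := Pe) h1 h2
      obtain ⟨r, hr1, hr2, hrempty⟩ := hcstar
      have hσcs0 : σ 0 + cs ≤ σ cs := hσ0j cs hcsj
      have hσcsj : σ cs + (j - cs) ≤ σ j := hσupp cs j hcsj le_rfl
      have hcs1 : 1 ≤ cs := by
        by_contra h
        have hcs0 : cs = 0 := by omega
        rw [hcs0] at hr2
        omega
      -- the augmented region
      set Qbig := (Q ∪ rowSegF P i j) ∪
        (Finset.Ioc cs j).biUnion (fun y => colSegF P (i-1) y) with hQbig
      -- count bound for Qbig on the call window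
      have hQbigcard : ∀ t, r ≤ t → t ≤ σ cs - 1 → q + 1 + (j - cs) ≤ ((Pf t) ∩ Qbig).card := by
        intro t ht1 ht2
        have htσ0 : σ 0 ≤ t := le_trans hr1 ht1
        have htσj : t ≤ σ j := by omega
        have hq : q ≤ ((Pf t) ∩ Q).card := hQcard t (by omega) (by omega)
        have hrow1 : 1 ≤ ((Pf t) ∩ rowSegF P i j).card :=
          Finset.card_pos.2 (hcover t htσ0 htσj)
        have hd1 : Disjoint Q (rowSegF P i j) := Finset.disjoint_left.2 (fun v hv hv2 => by
          have h := mem_rowSegF.1 hv2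
          exact hQcone v hv ⟨le_of_eq h.1, h.2⟩)
        have hc1 := count_disj (Pf t) Q (rowSegF P i j) hd1
        have hcols : j - cs ≤ ((Pf t) ∩ (Finset.Ioc cs j).biUnion
            (fun y => colSegF P (i-1) y)).card := by
          have h := count_biUnion (Pf t) (Finset.Ioc cs j) (fun y => colSegF P (i-1) y)
            (fun a _ b _ hab => Finset.disjoint_left.2 (fun v hv hv2 => by
              have h1 := (mem_colSegF.1 hv).2
              have h2 := (mem_colSegF.1 hv2).2
              exact hab (by omega)))
            (fun y hy => by
              obtain ⟨hy1, hy2⟩ := Finset.mem_Ioc.1 hy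
              have hny : ¬ (∃ r, σ 0 ≤ r ∧ r ≤ σ y - 2 ∧
                  ∀ v ∈ Pf r, ¬((v.1 : ℕ) ≤ i - 1 ∧ (v.2 : ℕ) = y)) := hcsmax y hy1 hy2
              push_neg at hny
              have hσy : σ cs + (y - cs) ≤ σ y := hσupp cs y (by omega) hy2
              obtain ⟨v, hv1, hv2⟩ := hny t htσ0 (by omega)
              exact ⟨v, Finset.mem_inter.2 ⟨hv1, mem_colSegF.2 hv2⟩⟩)
          simpa [Nat.card_Ioc] using h
        have hd2 : Disjoint (Q ∪ rowSegF P i j)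
            ((Finset.Ioc cs j).biUnion (fun y => colSegF P (i-1) y)) := by
          refine Finset.disjoint_left.2 (fun v hv hv2 => ?_)
          obtain ⟨y, hy, hvy⟩ := Finset.mem_biUnion.1 hv2
          obtain ⟨hvy1, hvy2⟩ := mem_colSegF.1 hvy
          obtain ⟨hy1, hy2⟩ := Finset.mem_Ioc.1 hy
          rcases Finset.mem_union.1 hv with hv | hv
          · exact hQcone v hv ⟨by omega, by omega⟩
          · have h := (mem_rowSegF.1 hv).1
            omega
        have hc2 := count_disj (Pf t) (Q ∪ rowSegF P i j) _ hd2
        rw [← hQbig] at hc2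
        omega
      -- transposed strategy
      set Pf' : ℕ → Finset (Fin P × Fin P) := fun t => (Pf t).image Prod.swap with hPf'
      have hstep' := swap_step hstep
      set Q' := Qbig.image Prod.swap with hQ'
      have himg : ∀ (t : ℕ) (X : Finset (Fin P × Fin P)),
          ((Pf' t) ∩ X.image Prod.swap).card = ((Pf t) ∩ X).card := by
        intro t X
        rw [hPf']
        rw [← Finset.image_inter _ _ Prod.swap_injective,
          Finset.card_image_of_injective _ Prod.swap_injective]
      have hQcone' : ∀ v ∈ Q', ¬((v.1 : ℕ) ≤ cs ∧ (v.2 : ℕ) ≤ i - 1) := by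
        intro v hv
        obtain ⟨u, hu, rfl⟩ := Finset.mem_image.1 hv
        rintro ⟨hv1, hv2⟩
        rw [Prod.fst_swap] at hv1
        rw [Prod.snd_swap] at hv2
        rcases Finset.mem_union.1 hu with hu | hu
        · rcases Finset.mem_union.1 hu with hu | hu
          · exact hQcone u hu ⟨by omega, by omega⟩
          · have h := (mem_rowSegF.1 hu).1
            omega
        · obtain ⟨y, hy, hvy⟩ := Finset.mem_biUnion.1 hu
          obtain ⟨hy1, _⟩ := Finset.mem_Ioc.1 hy
          have h := (mem_colSegF.1 hvy).2
          omega
      have hQcard' : ∀ t, r ≤ t → t ≤ σ cs - 1 →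
          q + 1 + (j - cs) ≤ ((Pf' t) ∩ Q').card := by
        intro t h1 h2
        rw [hQ', himg t Qbig]
        exact hQbigcard t h1 h2
      have hempty' : ∀ v ∈ Pf' r, ¬((v.1 : ℕ) = cs ∧ (v.2 : ℕ) ≤ i - 1) := by
        intro v hv
        obtain ⟨u, hu, rfl⟩ := Finset.mem_image.1 hv
        rintro ⟨h1, h2⟩
        rw [Prod.fst_swap] at h1
        rw [Prod.snd_swap] at h2
        exact hrempty u hu ⟨h2, h1⟩
      have htar' : fvtx P hP cs (i-1) ∈ Pf' (σ cs - 1) := by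
        rw [hPf', ← fvtx_swap hP (i-1) cs]
        exact Finset.mem_image_of_mem _ (hsupp cs hcsj).1
      obtain ⟨t, ht1, ht2, ht3⟩ := ih Pf' hstep' cs (i-1) (by omega) (by omega)
        (by omega) (by omega) r (σ cs - 1) (q + 1 + (j - cs)) Q'
        (by omega) (by omega) hQcone' hQcard' hempty' htar'
      refine ⟨t, by omega, by omega, ?_⟩
      have htrans : ((Pf' t) ∩ (coneF P cs (i-1) ∪ Q')).card =
          ((Pf t) ∩ (coneF P (i-1) cs ∪ Qbig)).card := by
        rw [hQ', ← image_coneF (i-1) cs, ← Finset.image_union, himg]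
      rw [htrans] at ht3
      have hsub : (Pf t) ∩ (coneF P (i-1) cs ∪ Qbig) ⊆ (Pf t) ∩ (coneF P i j ∪ Q) := by
        apply Finset.inter_subset_inter (le_refl _)
        intro v hv
        rcases Finset.mem_union.1 hv with hv | hv
        · obtain ⟨h1, h2⟩ := mem_coneF.1 hv
          exact Finset.mem_union_left _ (mem_coneF.2 ⟨by omega, by omega⟩)
        · rcases Finset.mem_union.1 hv with hv | hv
          · rcases Finset.mem_union.1 hv with hv | hv
            · exact Finset.mem_union_right _ hv
            · obtain ⟨h1, h2⟩ := mem_rowSegF.1 hv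
              exact Finset.mem_union_left _ (mem_coneF.2 ⟨by omega, h2⟩)
          · obtain ⟨y, hy, hvy⟩ := Finset.mem_biUnion.1 hv
            obtain ⟨h1, h2⟩ := mem_colSegF.1 hvy
            obtain ⟨_, hy2⟩ := Finset.mem_Ioc.1 hy
            exact Finset.mem_union_left _ (mem_coneF.2 ⟨by omega, by omega⟩)
      have hfin := Finset.card_le_card hsub
      have harith : min i j + 2 + q ≤ min cs (i-1) + 2 + (q + 1 + (j - cs)) := by
        rcases Nat.le_total cs (i-1) with h | h
        · rw [min_eq_left h]
          have := min_le_right i j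
          omega
        · rw [min_eq_right h]
          have := min_le_left i j
          omega
      omega
    · -- Case B: terminal count at σ 0
      push_neg at hex
      have hσ0σj : σ 0 + j ≤ σ j := hσ0j j le_rfl
      refine ⟨σ 0, hσ0γ, by omega, ?_⟩
      -- every column segment is nonempty at σ 0
      have hcolne : ∀ c', c' ≤ j → ((Pf (σ 0)) ∩ colSegF P (i-1) c').Nonempty := by
        intro c' hc'
        by_cases hfar : σ 0 ≤ σ c' - 2
        · have hny : ¬ (∃ r, σ 0 ≤ r ∧ r ≤ σ c' - 2 ∧
              ∀ v ∈ Pf r, ¬((v.1 : ℕ) ≤ i - 1 ∧ (v.2 : ℕ) = c')) := hex c' hc'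
          push_neg at hny
          obtain ⟨v, hv1, hv2⟩ := hny (σ 0) le_rfl hfar
          exact ⟨v, Finset.mem_inter.2 ⟨hv1, mem_colSegF.2 hv2⟩⟩
        · -- σ c' ≤ σ 0 + 1, so c' ≤ 1
          have h1 : σ 0 + c' ≤ σ c' := hσ0j c' hc'
          have hσ0pos : 1 ≤ σ 0 := by omega
          have hc'le : c' ≤ 1 := by omega
          rcases Nat.lt_or_ge c' 1 with h | h
          · have hc'0 : c' = 0 := by omega
            subst hc'0
            refine ⟨fvtx P hP (i-1) 0, Finset.mem_inter.2 ⟨(hsupp 0 (by omega)).2,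
              mem_colSegF.2 ⟨?_, ?_⟩⟩⟩
            · rw [fvtx_fst hP 0 (show i-1 < P by omega)]
            · rw [fvtx_snd hP (i-1) hP]
          · have hc'1 : c' = 1 := by omega
            subst hc'1
            have hs1 : σ 1 = σ 0 + 1 := by omega
            have hmem := (hsupp 1 hc').1
            rw [hs1] at hmem
            simp only [Nat.add_sub_cancel] at hmem
            refine ⟨fvtx P hP (i-1) 1, Finset.mem_inter.2 ⟨hmem, mem_colSegF.2 ⟨?_, ?_⟩⟩⟩
            · rw [fvtx_fst hP 1 (show i-1 < P by omega)]
            · rw [fvtx_snd hP (i-1) (show 1 < P by omega)]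
      -- assemble the count
      have hq : q ≤ ((Pf (σ 0)) ∩ Q).card := hQcard (σ 0) (by omega) (by omega)
      have hrowne : 1 ≤ ((Pf (σ 0)) ∩ rowSegF P i j).card := by
        refine Finset.card_pos.2 ⟨fvtx P hP i 0, Finset.mem_inter.2
          ⟨(hσ1 0 (by omega)).2.2.2, mem_rowSegF.2 ⟨fvtx_fst hP 0 hi, ?_⟩⟩⟩
        rw [fvtx_snd hP i hP]
        omega
      have hd1 : Disjoint Q (rowSegF P i j) := Finset.disjoint_left.2 (fun v hv hv2 => by
        have h := mem_rowSegF.1 hv2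
        exact hQcone v hv ⟨le_of_eq h.1, h.2⟩)
      have hc1 := count_disj (Pf (σ 0)) Q (rowSegF P i j) hd1
      have hcols : j + 1 ≤ ((Pf (σ 0)) ∩ (Finset.range (j+1)).biUnion
          (fun y => colSegF P (i-1) y)).card := by
        have h := count_biUnion (Pf (σ 0)) (Finset.range (j+1)) (fun y => colSegF P (i-1) y)
          (fun a _ b _ hab => Finset.disjoint_left.2 (fun v hv hv2 => by
            have h1 := (mem_colSegF.1 hv).2
            have h2 := (mem_colSegF.1 hv2).2
            exact hab (by omega)))
          (fun y hy => hcolne y (by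
            have := Finset.mem_range.1 hy
            omega))
        simpa using h
      have hd2 : Disjoint (Q ∪ rowSegF P i j)
          ((Finset.range (j+1)).biUnion (fun y => colSegF P (i-1) y)) := by
        refine Finset.disjoint_left.2 (fun v hv hv2 => ?_)
        obtain ⟨y, hy, hvy⟩ := Finset.mem_biUnion.1 hv2
        obtain ⟨hvy1, hvy2⟩ := mem_colSegF.1 hvy
        have hyj : y < j + 1 := Finset.mem_range.1 hy
        rcases Finset.mem_union.1 hv with hv | hv
        · exact hQcone v hv ⟨by omega, by omega⟩
        · have h := (mem_rowSegF.1 hv).1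
          omega
      have hc2 := count_disj (Pf (σ 0)) (Q ∪ rowSegF P i j) _ hd2
      have hsub : (Pf (σ 0)) ∩ ((Q ∪ rowSegF P i j) ∪
          (Finset.range (j+1)).biUnion (fun y => colSegF P (i-1) y)) ⊆
          (Pf (σ 0)) ∩ (coneF P i j ∪ Q) := by
        apply Finset.inter_subset_inter (le_refl _)
        intro v hv
        rcases Finset.mem_union.1 hv with hv | hv
        · rcases Finset.mem_union.1 hv with hv | hv
          · exact Finset.mem_union_right _ hv
          · obtain ⟨h1, h2⟩ := mem_rowSegF.1 hv
            exact Finset.mem_union_left _ (mem_coneF.2 ⟨by omega, h2⟩)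
        · obtain ⟨y, hy, hvy⟩ := Finset.mem_biUnion.1 hv
          obtain ⟨h1, h2⟩ := mem_colSegF.1 hvy
          have hyj : y < j + 1 := Finset.mem_range.1 hy
          exact Finset.mem_union_left _ (mem_coneF.2 ⟨by omega, by omega⟩)
      have hfin := Finset.card_le_card hsub
      have hminj : min i j ≤ j := min_le_right i j
      omega

end GridLB

namespace GridLB

lemma root_mem_rootFinset {P : ℕ} (hP2 : 2 ≤ P) (hP : 0 < P) :
    fvtx P hP (P-1) (P-1) ∈ rootFinset (gridE P) := by
  rw [rootFinset, Set.Finite.mem_toFinset]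
  intro w hw
  rcases hw with ⟨h1, _⟩ | ⟨_, h2⟩
  · rw [fvtx_fst hP (P-1) (show P-1 < P by omega)] at h1
    have := w.1.isLt
    omega
  · rw [fvtx_snd hP (P-1) (show P-1 < P by omega)] at h2
    have := w.2.isLt
    omega

end GridLB


/-- For every `P ≥ 2`, every irreversible pebbling strategy on the grid
DAG `G◇_P` has pebbling cost at least `P + 1`. -/
theorem grid_irrev_lower (P : ℕ) (hP : 2 ≤ P)
    (Pf : ℕ → Finset (Fin P × Fin P)) (T : ℕ)
    (hstrat : IsIrrevStrategy (gridE P) Pf T) :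
    P + 1 ≤ pebCost Pf T := by
  obtain ⟨h0, hT, hstep⟩ := hstrat
  have hP0 : 0 < P := by omega
  have hroot : GridLB.fvtx P hP0 (P-1) (P-1) ∈ Pf T := by
    rw [hT]
    exact GridLB.root_mem_rootFinset hP hP0
  obtain ⟨t, ht1, ht2, ht3⟩ := GridLB.master P T hP0 (2*P) Pf hstep (P-1) (P-1)
    (by omega) (by omega) (by omega) (by omega) 0 T 0 ∅ (by omega) le_rfl
    (by simp) (fun t _ _ => Nat.zero_le _) (by simp [h0]) hroot
  have h4 : P + 1 ≤ (Pf t).card := by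
    have h5 : min (P-1) (P-1) + 2 + 0 = P + 1 := by
      rw [min_self]; omega
    rw [h5] at ht3
    calc P + 1 ≤ ((Pf t) ∩ (GridLB.coneF P (P-1) (P-1) ∪ ∅)).card := ht3
      _ ≤ (Pf t).card := Finset.card_le_card Finset.inter_subset_left
  have h6 : (Pf t).card ≤ pebCost Pf T := by
    have hmem : t ∈ Finset.range (T+1) := Finset.mem_range.2 (by omega)
    exact Finset.le_sup (f := fun r => (Pf r).card) hmem
  omega
end

section
/- For every integer P≥1 and every vertex v of the grid DAG G◇_P other than the root (P,P), there exists a sequence of subsets P_0=∅, P_1,…,P_T of the vertices of G◇_P obeying the irreversible pebbling move rules (at each step exactly one vertex is pebbled or unpebbled, and pebbling a vertex requires all its direct predecessors to be pebbled) such that v∈P_T, max_t |P_t| ≤ P, and the leaf (1,1) is pebbled at exactly one time step. -/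
variable {V : Type*}

section FW
variable [DecidableEq V] (E : V → V → Prop)

def mapply (A : Finset V) (m : Bool × V) : Finset V :=
  if m.1 then insert m.2 A else A.erase m.2

def Run (N : ℕ) : Finset V → List (Bool × V) → Finset V → Prop
  | A, [], B => A = B ∧ A.card ≤ N
  | A, m :: l, B => A.card ≤ N ∧ (m.1 = true → ∀ w, E w m.2 → w ∈ A) ∧
      Run N (mapply A m) l B

variable {E}

lemma run_append {N : ℕ} : ∀ {l1 : List (Bool × V)} {A B C : Finset V}
    {l2 : List (Bool × V)}, Run E N A l1 B → Run E N B l2 C → Run E N A (l1 ++ l2) C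
  | [], A, B, C, l2, h1, h2 => by
      obtain ⟨rfl, -⟩ := h1; simpa using h2
  | m :: l, A, B, C, l2, h1, h2 => by
      obtain ⟨hc, hp, hr⟩ := h1
      exact ⟨hc, hp, run_append hr h2⟩

lemma run_card {N : ℕ} : ∀ {l : List (Bool × V)} {A B : Finset V} (t : ℕ),
    Run E N A l B → ((l.take t).foldl mapply A).card ≤ N
  | [], A, B, t, h => by simpa using h.2
  | m :: l, A, B, 0, h => by simpa using h.1
  | m :: l, A, B, t + 1, h => by
      simpa using run_card t h.2.2

lemma run_exec {N : ℕ} : ∀ {l : List (Bool × V)} {A B : Finset V},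
    Run E N A l B → l.foldl mapply A = B
  | [], A, B, h => h.1
  | m :: l, A, B, h => by simpa using run_exec h.2.2

lemma run_steps {N : ℕ} : ∀ {l : List (Bool × V)} {A B : Finset V} (t : ℕ),
    Run E N A l B → 1 ≤ t → t ≤ l.length →
    IrrevStep E ((l.take (t - 1)).foldl mapply A) ((l.take t).foldl mapply A)
  | [], A, B, t, h, h1, h2 => by simp at h2; omega
  | m :: l, A, B, 1, h, h1, h2 => by
      simp only [List.take_zero, List.take_succ_cons, List.take_zero, List.foldl_nil,
        List.foldl_cons]
      refine ⟨m.2, ?_⟩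
      rcases hm : m.1 with _ | _
      · right; simp [mapply, hm]
      · left; exact ⟨by simp [mapply, hm], h.2.1 hm⟩
  | m :: l, A, B, t + 2, h, h1, h2 => by
      simp only [List.take_succ_cons, List.foldl_cons]
      have := run_steps (t + 1) h.2.2 (by omega) (by simpa using h2)
      simpa using this

lemma conf_succ (l : List (Bool × V)) (A : Finset V) (t : ℕ) (ht : t < l.length) :
    (l.take (t + 1)).foldl mapply A = mapply ((l.take t).foldl mapply A) l[t] := by
  rw [List.take_succ, List.getElem?_eq_getElem ht, List.foldl_append]
  rfl

lemma newly {A : Finset V} {m : Bool × V} {x : V} (hx : x ∈ mapply A m) (hx' : x ∉ A) :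
    m = (true, x) := by
  obtain ⟨c, v⟩ := m
  rcases c with _ | _
  · simp only [mapply] at hx; exact absurd (Finset.mem_of_mem_erase hx) hx'
  · simp only [mapply, if_pos, Finset.mem_insert] at hx
    rcases hx with rfl | hx
    · rfl
    · exact absurd hx hx'

end FW

section Grid
variable {P : ℕ}

def vtx (hP : 0 < P) (i j : ℕ) : Fin P × Fin P :=
  (⟨i % P, Nat.mod_lt _ hP⟩, ⟨j % P, Nat.mod_lt _ hP⟩)

lemma vtx_fst (hP : 0 < P) (i j : ℕ) : ((vtx hP i j).1 : ℕ) = i % P := rfl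
lemma vtx_snd (hP : 0 < P) (i j : ℕ) : ((vtx hP i j).2 : ℕ) = j % P := rfl

lemma vtx_inj (hP : 0 < P) {i j i' j' : ℕ} (hi : i < P) (hj : j < P) (hi' : i' < P)
    (hj' : j' < P) (h : vtx hP i j = vtx hP i' j') : i = i' ∧ j = j' := by
  have h1 := congrArg (fun x => ((x.1 : ℕ), (x.2 : ℕ))) h
  simp only [vtx, Nat.mod_eq_of_lt hi, Nat.mod_eq_of_lt hj, Nat.mod_eq_of_lt hi',
    Nat.mod_eq_of_lt hj', Prod.mk.injEq] at h1
  exact h1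

end Grid

lemma eq_vtx_iff (hP : 0 < P) {i j : ℕ} (hi : i < P) (hj : j < P) (x : Fin P × Fin P) :
    x = vtx hP i j ↔ (x.1 : ℕ) = i ∧ (x.2 : ℕ) = j := by
  rw [Prod.ext_iff, Fin.ext_iff, Fin.ext_iff, vtx_fst, vtx_snd,
    Nat.mod_eq_of_lt hi, Nat.mod_eq_of_lt hj]

lemma mem_rowimg (hP : 0 < P) {r : ℕ} (hr : r < P) (s : Finset ℕ) (hs : ∀ c ∈ s, c < P)
    (x : Fin P × Fin P) :
    x ∈ s.image (vtx hP r) ↔ (x.1 : ℕ) = r ∧ (x.2 : ℕ) ∈ s := by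
  simp only [Finset.mem_image]
  constructor
  · rintro ⟨c, hc, rfl⟩
    refine ⟨by rw [vtx_fst, Nat.mod_eq_of_lt hr], ?_⟩
    rw [vtx_snd, Nat.mod_eq_of_lt (hs c hc)]; exact hc
  · rintro ⟨h1, h2⟩
    exact ⟨(x.2 : ℕ), h2, ((eq_vtx_iff hP hr (hs _ h2) x).mpr ⟨h1, rfl⟩).symm⟩

lemma grid_pred (hP : 0 < P) {i j : ℕ} (hi : i < P) (hj : j < P) (w : Fin P × Fin P)
    (h : gridE P w (vtx hP i j)) :
    (1 ≤ i ∧ w = vtx hP (i - 1) j) ∨ (1 ≤ j ∧ w = vtx hP i (j - 1)) := by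
  obtain ⟨h1, h2⟩ | ⟨h1, h2⟩ := h
  · rw [vtx_fst, Nat.mod_eq_of_lt hi] at h1
    left
    have h2' := congrArg Fin.val h2
    rw [vtx_snd, Nat.mod_eq_of_lt hj] at h2'
    exact ⟨by omega, (eq_vtx_iff hP (by omega) hj w).mpr ⟨by omega, by omega⟩⟩
  · rw [vtx_snd, Nat.mod_eq_of_lt hj] at h2
    right
    have h1' := congrArg Fin.val h1
    rw [vtx_fst, Nat.mod_eq_of_lt hi] at h1'
    exact ⟨by omega, (eq_vtx_iff hP hi (by omega) w).mpr ⟨by omega, by omega⟩⟩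

def rowImg (hP : 0 < P) (r n : ℕ) : Finset (Fin P × Fin P) :=
  (Finset.range n).image (vtx hP r)

def Dconf (hP : 0 < P) (b i j : ℕ) : Finset (Fin P × Fin P) :=
  ((Finset.Icc j b).image (vtx hP (i - 1))) ∪ rowImg hP i j

lemma mem_rowImg (hP : 0 < P) {r n : ℕ} (hr : r < P) (hn : n ≤ P) (x : Fin P × Fin P) :
    x ∈ rowImg hP r n ↔ (x.1 : ℕ) = r ∧ (x.2 : ℕ) < n := by
  rw [rowImg, mem_rowimg hP hr _ (fun c hc => by simp at hc; omega)]
  simp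

lemma mem_Dconf (hP : 0 < P) {b i j : ℕ} (hb : b + 2 ≤ P) (hi : i < P) (hj : j ≤ b + 1)
    (x : Fin P × Fin P) :
    x ∈ Dconf hP b i j ↔
      ((x.1 : ℕ) = i - 1 ∧ j ≤ (x.2 : ℕ) ∧ (x.2 : ℕ) ≤ b) ∨
      ((x.1 : ℕ) = i ∧ (x.2 : ℕ) < j) := by
  rw [Dconf, Finset.mem_union, mem_rowimg hP (by omega) _ (fun c hc => by simp at hc; omega),
    mem_rowImg hP hi (by omega)]
  simp

lemma card_rowImg (hP : 0 < P) (r n : ℕ) : (rowImg hP r n).card ≤ n := by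
  exact le_trans (Finset.card_image_le) (by simp)

lemma card_Dconf (hP : 0 < P) (b i j : ℕ) (hj : j ≤ b + 1) :
    (Dconf hP b i j).card ≤ b + 1 := by
  refine le_trans (Finset.card_union_le _ _) ?_
  have h1 := Finset.card_image_le (s := Finset.Icc j b) (f := vtx hP (i - 1))
  have h2 := card_rowImg hP i j
  simp only [Nat.card_Icc] at h1
  omega

def rowL (hP : 0 < P) : ℕ → ℕ → List (Bool × (Fin P × Fin P))
  | _, 0 => []
  | j, n + 1 => (true, vtx hP 0 j) :: rowL hP (j + 1) n

def phL (hP : 0 < P) (i : ℕ) : ℕ → ℕ → List (Bool × (Fin P × Fin P))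
  | _, 0 => []
  | j, n + 1 => (true, vtx hP i j) :: (false, vtx hP (i - 1) j) :: phL hP i (j + 1) n

def loopL (hP : 0 < P) (b : ℕ) : ℕ → ℕ → List (Bool × (Fin P × Fin P))
  | _, 0 => []
  | i, n + 1 => phL hP i 0 (b + 1) ++ loopL hP b (i + 1) n

lemma run_row (hP : 0 < P) {b : ℕ} (hb : b + 2 ≤ P) :
    ∀ n j, j + n = b + 1 →
      Run (gridE P) (b + 2) (rowImg hP 0 j) (rowL hP j n) (rowImg hP 0 (b + 1))
  | 0, j, h => by
      rw [rowL]
      exact ⟨by rw [show j = b + 1 by omega], le_trans (card_rowImg hP 0 j) (by omega)⟩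
  | n + 1, j, h => by
      rw [rowL]
      refine ⟨le_trans (card_rowImg hP 0 j) (by omega), fun _ w hw => ?_, ?_⟩
      · rcases grid_pred hP hP (by omega : j < P) w hw with ⟨h1, _⟩ | ⟨h1, rfl⟩
        · omega
        · rw [mem_rowImg hP hP (by omega), vtx_fst, vtx_snd, Nat.mod_eq_of_lt hP,
            Nat.mod_eq_of_lt (by omega : j - 1 < P)]
          omega
      · have : mapply (rowImg hP 0 j) (true, vtx hP 0 j) = rowImg hP 0 (j + 1) := by
          simp only [mapply, if_pos, rowImg, Finset.range_add_one, Finset.image_insert]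
        rw [this]
        exact run_row hP hb n (j + 1) (by omega)

lemma Dstep (hP : 0 < P) {b i j : ℕ} (hb : b + 2 ≤ P) (hi1 : 1 ≤ i) (hiP : i < P)
    (hj : j ≤ b) :
    (insert (vtx hP i j) (Dconf hP b i j)).erase (vtx hP (i - 1) j) =
      Dconf hP b i (j + 1) := by
  ext x
  rw [Finset.mem_erase, Finset.mem_insert, mem_Dconf hP hb hiP (by omega),
    mem_Dconf hP hb hiP (by omega), eq_vtx_iff hP hiP (by omega), Ne,
    eq_vtx_iff hP (by omega : i - 1 < P) (by omega : j < P) x]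
  omega

lemma run_phase (hP : 0 < P) {b i : ℕ} (hb : b + 2 ≤ P) (hi1 : 1 ≤ i) (hiP : i < P) :
    ∀ n j, j + n = b + 1 →
      Run (gridE P) (b + 2) (Dconf hP b i j) (phL hP i j n) (rowImg hP i (b + 1))
  | 0, j, h => by
      rw [phL]
      refine ⟨?_, le_trans (card_Dconf hP b i j (by omega)) (by omega)⟩
      rw [Dconf, show j = b + 1 by omega, Finset.Icc_eq_empty (by omega)]
      simp
  | n + 1, j, h => by
      rw [phL]
      have hjb : j ≤ b := by omega
      have hmemD := mem_Dconf hP hb hiP (by omega : j ≤ b + 1) (P := P)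
      have hm1 : mapply (Dconf hP b i j) (true, vtx hP i j) =
          insert (vtx hP i j) (Dconf hP b i j) := by simp [mapply]
      refine ⟨le_trans (card_Dconf hP b i j (by omega)) (by omega), fun _ w hw => ?_,
        by rw [hm1]
           have := card_Dconf hP b i j (by omega)
           have := Finset.card_insert_le (vtx hP i j) (Dconf hP b i j)
           omega,
        fun hx => by simp at hx, ?_⟩
      · rcases grid_pred hP hiP (by omega : j < P) w hw with ⟨h1, rfl⟩ | ⟨h1, rfl⟩
        · rw [hmemD, vtx_fst, vtx_snd, Nat.mod_eq_of_lt (by omega : i - 1 < P),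
            Nat.mod_eq_of_lt (by omega : j < P)]
          left; omega
        · rw [hmemD, vtx_fst, vtx_snd, Nat.mod_eq_of_lt hiP,
            Nat.mod_eq_of_lt (by omega : j - 1 < P)]
          right; omega
      · have hm2 : mapply (mapply (Dconf hP b i j) (true, vtx hP i j))
            (false, vtx hP (i - 1) j) = Dconf hP b i (j + 1) := by
          rw [hm1]
          simpa [mapply] using Dstep hP hb hi1 hiP hjb
        rw [hm2]
        exact run_phase hP hb hi1 hiP n (j + 1) (by omega)

lemma Dconf_zero (hP : 0 < P) (b i : ℕ) : Dconf hP b i 0 = rowImg hP (i - 1) (b + 1) := by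
  rw [Dconf, rowImg, rowImg]
  have : Finset.Icc 0 b = Finset.range (b + 1) := by
    rw [← Finset.Ico_add_one_right_eq_Icc, Nat.Ico_zero_eq_range]
  rw [this]
  simp

lemma run_loop (hP : 0 < P) {b : ℕ} (hb : b + 2 ≤ P) :
    ∀ n i, 1 ≤ i → i + n ≤ P →
      Run (gridE P) (b + 2) (rowImg hP (i - 1) (b + 1)) (loopL hP b i n)
        (rowImg hP (i - 1 + n) (b + 1))
  | 0, i, hi1, hiP => by
      rw [loopL]
      exact ⟨by norm_num, le_trans (card_rowImg hP _ _) (by omega)⟩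
  | n + 1, i, hi1, hiP => by
      rw [loopL]
      refine run_append (B := rowImg hP i (b + 1)) ?_ ?_
      · rw [← Dconf_zero hP b i]
        exact run_phase hP hb hi1 (by omega) (b + 1) 0 (by omega)
      · have := run_loop hP hb n (i + 1) (by omega) (by omega)
        rw [show i + 1 - 1 = i from rfl] at this
        rw [show i - 1 + (n + 1) = i + n by omega]
        exact this

lemma run_all (hP : 0 < P) {a b : ℕ} (ha : a < P) (hb : b + 2 ≤ P) :
    Run (gridE P) (b + 2) ∅ (rowL hP 0 (b + 1) ++ loopL hP b 1 a)
      (rowImg hP a (b + 1)) := by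
  refine run_append (B := rowImg hP 0 (b + 1)) ?_ ?_
  · have : rowImg hP 0 0 = ∅ := by simp [rowImg]
    rw [← this]
    exact run_row hP hb (b + 1) 0 (by omega)
  · have := run_loop hP hb a 1 le_rfl (by omega)
    simpa using this

lemma rowL_length (hP : 0 < P) : ∀ n j, (rowL hP j n).length = n
  | 0, j => rfl
  | n + 1, j => by rw [rowL]; simp [rowL_length hP n (j + 1)]

lemma rowL_ne (hP : 0 < P) : ∀ n j, 1 ≤ j → j + n ≤ P →
    ∀ m ∈ rowL hP j n, m ≠ (true, vtx hP 0 0)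
  | 0, j, hj, hjn, m, hm => by simp [rowL] at hm
  | n + 1, j, hj, hjn, m, hm => by
      rw [rowL, List.mem_cons] at hm
      rcases hm with rfl | hm
      · intro h
        have := (vtx_inj hP (by omega) (by omega) (by omega) (by omega)
          (congrArg Prod.snd h)).2
        omega
      · exact rowL_ne hP n (j + 1) (by omega) (by omega) m hm

lemma phL_ne (hP : 0 < P) {i : ℕ} (hi1 : 1 ≤ i) (hiP : i < P) :
    ∀ n j, ∀ m ∈ phL hP i j n, m ≠ (true, vtx hP 0 0)
  | 0, j, m, hm => by simp [phL] at hm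
  | n + 1, j, m, hm => by
      rw [phL, List.mem_cons, List.mem_cons] at hm
      rcases hm with rfl | rfl | hm
      · intro h
        have h2 := congrArg (fun p => ((p.2.1 : ℕ))) h
        simp only [vtx_fst, Nat.mod_eq_of_lt hiP, Nat.zero_mod] at h2
        omega
      · intro h
        exact absurd (congrArg Prod.fst h) (by simp)
      · exact phL_ne hP hi1 hiP n (j + 1) m hm

lemma loopL_ne (hP : 0 < P) (b : ℕ) : ∀ n i, 1 ≤ i → i + n ≤ P →
    ∀ m ∈ loopL hP b i n, m ≠ (true, vtx hP 0 0)
  | 0, i, hi1, hin, m, hm => by simp [loopL] at hm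
  | n + 1, i, hi1, hin, m, hm => by
      rw [loopL, List.mem_append] at hm
      rcases hm with hm | hm
      · exact phL_ne hP hi1 (by omega) (b + 1) 0 m hm
      · exact loopL_ne hP b n (i + 1) (by omega) (by omega) m hm

section FW2
variable [DecidableEq V]

lemma once_lemma {x : V} {tl : List (Bool × V)} (h : ∀ m ∈ tl, m ≠ (true, x)) :
    ∀ t, 1 ≤ t → t ≤ ((true, x) :: tl).length →
    x ∈ ((((true, x) :: tl).take t).foldl mapply ∅) →
    x ∉ ((((true, x) :: tl).take (t - 1)).foldl mapply ∅) → t = 1 := by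
  intro t h1 h2 h3 h4
  by_contra hne
  obtain ⟨s, rfl⟩ : ∃ s, t = s + 2 := ⟨t - 2, by omega⟩
  have hlt : s + 1 < ((true, x) :: tl).length := by omega
  have hc := conf_succ ((true, x) :: tl) ∅ (s + 1) hlt
  rw [show s + 1 + 1 = s + 2 from rfl] at hc
  rw [show s + 2 - 1 = s + 1 from rfl] at h4
  rw [hc] at h3
  have h5 := newly h3 h4
  have hsl : s < tl.length := by simpa using hlt
  rw [List.getElem_cons_succ] at h5
  exact h (tl[s]) (List.getElem_mem hsl) h5

end FW2

lemma construct (hP : 0 < P) (a b : ℕ) (ha : a < P) (hb : b + 2 ≤ P) :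
    ∃ (Pf : ℕ → Finset (Fin P × Fin P)) (T : ℕ),
      Pf 0 = ∅ ∧
      (∀ t, 1 ≤ t → t ≤ T → IrrevStep (gridE P) (Pf (t - 1)) (Pf t)) ∧
      vtx hP a b ∈ Pf T ∧
      pebCost Pf T ≤ P ∧
      (∃! t : ℕ, 1 ≤ t ∧ t ≤ T ∧ vtx hP 0 0 ∈ Pf t ∧ vtx hP 0 0 ∉ Pf (t - 1)) := by
  have hrun := run_all hP ha hb
  have hL1 : rowL hP 0 (b + 1) ++ loopL hP b 1 a =
      (true, vtx hP 0 0) :: (rowL hP 1 b ++ loopL hP b 1 a) := rfl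
  set L : List (Bool × (Fin P × Fin P)) := rowL hP 0 (b + 1) ++ loopL hP b 1 a with hLdef
  have hT1 : 1 ≤ L.length := by
    rw [hL1]; simp
  have htail : ∀ m ∈ rowL hP 1 b ++ loopL hP b 1 a, m ≠ (true, vtx hP 0 0) := by
    intro m hm
    rcases List.mem_append.mp hm with h | h
    · exact rowL_ne hP b 1 le_rfl (by omega) m h
    · exact loopL_ne hP b a 1 le_rfl (by omega) m h
  refine ⟨fun t => ((L.take t).foldl mapply ∅), L.length, by simp,
    fun t h1 h2 => run_steps t hrun h1 h2, ?_, ?_, ?_⟩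
  · show vtx hP a b ∈ (L.take L.length).foldl mapply ∅
    rw [List.take_length, run_exec hrun, mem_rowImg hP ha (by omega)]
    rw [vtx_fst, vtx_snd, Nat.mod_eq_of_lt ha, Nat.mod_eq_of_lt (by omega : b < P)]
    omega
  · exact Finset.sup_le fun t _ => le_trans (run_card t hrun) (by omega)

  · refine ⟨1, ⟨le_rfl, hT1, ?_, by simp⟩, ?_⟩
    · show vtx hP 0 0 ∈ (L.take 1).foldl mapply ∅
      rw [hL1]
      simp [mapply]
    · rintro t' ⟨h1, h2, h3, h4⟩
      simp only [hL1] at h2 h3 h4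
      exact once_lemma htail t' h1 h2 h3 h4

lemma swap_gridE {P : ℕ} {x y : Fin P × Fin P} :
    gridE P (Prod.swap x) (Prod.swap y) ↔ gridE P x y := by
  simp only [gridE, Prod.swap, Prod.fst, Prod.snd]
  tauto

/-- For every `P ≥ 1` and every non-root vertex `v` of the grid DAG
`G◇_P`, there is a sequence of pebble configurations starting from `∅`, obeying the
irreversible pebbling move rules, ending with a pebble on `v`, using at most `P`
pebbles, and pebbling the leaf `(0,0)` (“(1,1)”) at exactly one time step. -/
theorem grid_pebble_nonroot (P : ℕ) (hP : 1 ≤ P) (v : Fin P × Fin P)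
    (hv : v ≠ ((⟨P - 1, by omega⟩ : Fin P), (⟨P - 1, by omega⟩ : Fin P))) :
    ∃ (Pf : ℕ → Finset (Fin P × Fin P)) (T : ℕ),
      Pf 0 = ∅ ∧
      (∀ t, 1 ≤ t → t ≤ T → IrrevStep (gridE P) (Pf (t - 1)) (Pf t)) ∧
      v ∈ Pf T ∧
      pebCost Pf T ≤ P ∧
      (∃! t : ℕ, 1 ≤ t ∧ t ≤ T ∧
        ((⟨0, hP⟩ : Fin P), (⟨0, hP⟩ : Fin P)) ∈ Pf t ∧
        ((⟨0, hP⟩ : Fin P), (⟨0, hP⟩ : Fin P)) ∉ Pf (t - 1)) := by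
  have hP0 : 0 < P := hP
  have hleaf : ((⟨0, hP⟩ : Fin P), (⟨0, hP⟩ : Fin P)) = vtx hP0 0 0 := by
    simp [vtx]
  have hv' : ¬((v.1 : ℕ) = P - 1 ∧ (v.2 : ℕ) = P - 1) := by
    rintro ⟨h1, h2⟩
    exact hv (Prod.ext_iff.mpr ⟨Fin.ext h1, Fin.ext h2⟩)
  have hv1 := v.1.isLt
  have hv2 := v.2.isLt
  rcases Nat.lt_or_ge (v.2 : ℕ) (P - 1) with hbb | hbb
  · obtain ⟨Pf, T, hPf0, hstep, hmem, hcost, huniq⟩ :=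
      construct hP0 (v.1 : ℕ) (v.2 : ℕ) hv1 (by omega)
    have hveq : v = vtx hP0 (v.1 : ℕ) (v.2 : ℕ) :=
      (eq_vtx_iff hP0 hv1 hv2 v).mpr ⟨rfl, rfl⟩
    rw [← hveq] at hmem
    rw [← hleaf] at huniq
    exact ⟨Pf, T, hPf0, hstep, hmem, hcost, huniq⟩
  · have ha2 : (v.1 : ℕ) + 2 ≤ P := by omega
    obtain ⟨Pf, T, hPf0, hstep, hmem, hcost, huniq⟩ :=
      construct hP0 (v.2 : ℕ) (v.1 : ℕ) hv2 ha2
    have hmemiff : ∀ (t : ℕ), vtx hP0 0 0 ∈ (Pf t).image Prod.swap ↔ vtx hP0 0 0 ∈ Pf t := by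
      intro t
      have hsw : Prod.swap (vtx hP0 0 0) = vtx hP0 0 0 := rfl
      constructor
      · intro h
        obtain ⟨y, hy, he⟩ := Finset.mem_image.mp h
        have hy2 : y = vtx hP0 0 0 := Prod.swap_injective (he.trans hsw.symm)
        rwa [← hy2]
      · intro h
        exact Finset.mem_image.mpr ⟨_, h, hsw⟩
    refine ⟨fun t => (Pf t).image Prod.swap, T, by simp only; rw [hPf0]; simp, ?_, ?_, ?_, ?_⟩
    · intro t h1 h2
      show IrrevStep (gridE P) ((Pf (t - 1)).image Prod.swap) ((Pf t).image Prod.swap)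
      obtain ⟨w, hw⟩ := hstep t h1 h2
      refine ⟨Prod.swap w, ?_⟩
      rcases hw with ⟨he, hpred⟩ | he
      · left
        refine ⟨by rw [he, Finset.image_insert], fun u hu => ?_⟩
        rw [← Prod.swap_swap u] at hu
        have h3 := hpred _ (swap_gridE.mp hu)
        exact Finset.mem_image.mpr ⟨Prod.swap u, h3, Prod.swap_swap u⟩
      · right
        rw [he, Finset.image_erase Prod.swap_injective]
    · have hveq : Prod.swap v = vtx hP0 (v.2 : ℕ) (v.1 : ℕ) :=
        (eq_vtx_iff hP0 hv2 hv1 _).mpr ⟨rfl, rfl⟩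
      rw [← hveq] at hmem
      show v ∈ (Pf T).image Prod.swap
      exact Finset.mem_image.mpr ⟨Prod.swap v, hmem, Prod.swap_swap v⟩
    · calc pebCost (fun t => (Pf t).image Prod.swap) T
          = pebCost Pf T :=
            Finset.sup_congr rfl fun t _ =>
              Finset.card_image_of_injective _ Prod.swap_injective
        _ ≤ P := hcost
    · rw [hleaf]
      obtain ⟨t, ⟨h1, h2, h3, h4⟩, hu⟩ := huniq
      exact ⟨t, ⟨h1, h2, (hmemiff t).mpr h3, fun hc => h4 ((hmemiff _).mp hc)⟩,
        fun t' ⟨g1, g2, g3, g4⟩ =>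
          hu t' ⟨g1, g2, (hmemiff t').mp g3, fun hc => g4 ((hmemiff _).mpr hc)⟩⟩
end

section
/- For every integer P≥2, there exists a spooky pebbling strategy on the grid DAG G◇_P with pebbling cost at most P+1. -/
variable {V : Type*}

/-!
Sweep the grid row by row while keeping a window of one row of pebbles: each cell is
pebbled as soon as its two predecessors are, and the cell above it is then ghosted, so at
most `P + 1` pebbles are ever present. This leaves the root pebbled and every other vertex
a ghost. The ghosts are cleared in decreasing row-major order: to clear `v`, sweep the
rectangle of cells below `v` again (by rows or by columns, whichever are shorter), unghost
and unpebble `v`, and ghost the window. Since `v` is not the root, the shorter side of its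
rectangle has at most `P - 1` cells, so together with the root pebble the cost stays within
`P + 1`.
-/

open Finset Relation

theorem Relation.ReflTransGen.exists_seq {α : Type*} {r : α → α → Prop} {a b : α}
    (h : ReflTransGen r a b) :
    ∃ (f : ℕ → α) (T : ℕ), f 0 = a ∧ f T = b ∧ ∀ t < T, r (f t) (f (t + 1)) := by
  induction h with
  | refl => exact ⟨fun _ => a, 0, rfl, rfl, by simp⟩
  | @tail b c _ hbc ih =>
    obtain ⟨f, T, h0, hT, hf⟩ := ih
    refine ⟨fun t => if t ≤ T then f t else c, T + 1, by simp [h0], by simp, fun t ht => ?_⟩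
    rcases Nat.lt_succ_iff_lt_or_eq.1 ht with ht | rfl
    · simpa [ht.le, Nat.succ_le_of_lt ht] using hf t ht
    · simpa [hT] using hbc

section SpookyGame

variable [DecidableEq V] (E : V → V → Prop)

/-- A state is a pair (pebbles, ghosts); the pebble bound is imposed on the state reached. -/
def SpookyMove (c : ℕ) (s t : Finset V × Finset V) : Prop :=
  SpookyStep E s.1 t.1 s.2 t.2 ∧ t.1.card ≤ c

theorem exists_spookyStrategy_of_reflTransGen [Finite V] {c : ℕ}
    (h : ReflTransGen (SpookyMove E c) (∅, ∅) (rootFinset E, ∅)) :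
    ∃ (Pf Sf : ℕ → Finset V) (T : ℕ), IsSpookyStrategy E Pf Sf T ∧ pebCost Pf T ≤ c := by
  obtain ⟨f, T, h0, hT, hf⟩ := h.exists_seq
  refine ⟨fun t => (f t).1, fun t => (f t).2, T,
    ⟨by simp [h0], by simp [h0], by simp [hT], by simp [hT], fun t ht hT => ?_⟩,
    Finset.sup_le fun t ht => ?_⟩
  · obtain ⟨t, rfl⟩ := Nat.exists_eq_add_of_le' ht
    exact (hf t hT).1
  · cases t with
    | zero => simp [h0]
    | succ t => exact (hf t (by simpa using ht)).2

variable {E} {c : ℕ}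

namespace SpookyMove

theorem reflTransGen_ghost_finset (X : Finset V) {A S : Finset V} (hA : A.card ≤ c) :
    ReflTransGen (SpookyMove E c) (A, S) (A \ X, S ∪ X) := by
  induction X using Finset.induction_on generalizing A S with
  | empty => simp [ReflTransGen.refl]
  | insert x X _ ih =>
    have hghost : SpookyMove E c (A, S) (A.erase x, insert x S) :=
      ⟨⟨x, .inr <| .inr <| .inl ⟨rfl, rfl⟩⟩, card_erase_le.trans hA⟩
    convert ReflTransGen.head hghost (ih (card_erase_le.trans hA)) using 2
    · ext; simp only [mem_sdiff, mem_erase, mem_insert, not_or]; tauto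
    · ext; simp

theorem reflTransGen_erase_ghost {A S : Finset V} {v : V} (hpred : ∀ u, E u v → u ∈ A)
    (hv : v ∉ A) (hc : A.card + 1 ≤ c) :
    ReflTransGen (SpookyMove E c) (A, S) (A, S.erase v) := by
  have hunghost : SpookyMove E c (A, S) (insert v A, S.erase v) :=
    ⟨⟨v, .inr <| .inr <| .inr ⟨rfl, rfl, hpred⟩⟩, (card_insert_le v A).trans hc⟩
  have hunpebble : SpookyMove E c (insert v A, S.erase v) (A, S.erase v) :=
    ⟨⟨v, .inr <| .inl ⟨(erase_insert hv).symm, rfl, fun u hu => mem_insert_of_mem (hpred u hu)⟩⟩,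
      by simp only; omega⟩
  exact .tail (.single hunghost) hunpebble

theorem reflTransGen_map_equiv {W : Type*} [DecidableEq W] {F : W → W → Prop} (e : V ≃ W)
    (hE : ∀ u v, F (e u) (e v) ↔ E u v) {s t : Finset V × Finset V}
    (h : ReflTransGen (SpookyMove E c) s t) :
    ReflTransGen (SpookyMove F c) (s.1.map e.toEmbedding, s.2.map e.toEmbedding)
      (t.1.map e.toEmbedding, t.2.map e.toEmbedding) := by
  refine h.lift (fun s => (s.1.map e.toEmbedding, s.2.map e.toEmbedding)) fun s t hst => ?_
  obtain ⟨⟨v, hmove⟩, hc⟩ := hst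
  refine ⟨⟨e v, ?_⟩, by simpa using hc⟩
  have hpred : (∀ u, E u v → u ∈ s.1) → ∀ u, F u (e v) → u ∈ s.1.map e.toEmbedding :=
    fun h u hu => mem_map_equiv.2 (h _ ((hE _ _).1 (by simpa using hu)))
  rcases hmove with ⟨h1, h2, h3⟩ | ⟨h1, h2, h3⟩ | ⟨h1, h2⟩ | ⟨h1, h2, h3⟩ <;>
    simp only [h1, h2, map_insert, map_erase] at * <;> simp_all

end SpookyMove

end SpookyGame

namespace GridPebbling

variable {n : ℕ}

theorem gridE_swap {u v : Fin n × Fin n} : gridE n u.swap v.swap ↔ gridE n u v := by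
  simp only [gridE, Prod.fst_swap, Prod.snd_swap]
  tauto

theorem rootFinset_gridE [NeZero n] : rootFinset (gridE n) = {⊤} := by
  ext v
  simp only [rootFinset, Set.Finite.mem_toFinset, Set.mem_ofPred_eq, mem_singleton]
  constructor
  · intro h
    have h₁ := v.1.isLt
    have h₂ := v.2.isLt
    by_cases hv₁ : (v.1 : ℕ) + 1 < n
    · exact absurd (Or.inl ⟨rfl, rfl⟩) (h (⟨v.1 + 1, hv₁⟩, v.2))
    by_cases hv₂ : (v.2 : ℕ) + 1 < n
    · exact absurd (Or.inr ⟨rfl, rfl⟩) (h (v.1, ⟨v.2 + 1, hv₂⟩))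
    ext <;> simp only [Prod.fst_top, Prod.snd_top, Fin.val_top] <;> omega
  · rintro rfl w (⟨h, -⟩ | ⟨-, h⟩) <;>
      simp only [Prod.fst_top, Prod.snd_top, Fin.val_top] at h <;> omega

/-- For `v.2 < w`, the position of `v` in the row-major enumeration of the first `w`
columns. -/
def key (w : ℕ) (v : Fin n × Fin n) : ℕ := v.1 * w + v.2

variable {w : ℕ} {u v : Fin n × Fin n}

theorem key_lt_key_iff (hu : (u.2 : ℕ) < w) (hv : (v.2 : ℕ) < w) :
    key w u < key w v ↔ (u.1 : ℕ) < v.1 ∨ (u.1 : ℕ) = v.1 ∧ (u.2 : ℕ) < v.2 := by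
  unfold key
  rcases lt_trichotomy (u.1 : ℕ) v.1 with h | h | h
  · have := Nat.mul_le_mul_right w h
    rw [Nat.succ_mul] at this
    omega
  · simp only [h, lt_irrefl, true_and, false_or]
    omega
  · have := Nat.mul_le_mul_right w h
    rw [Nat.succ_mul] at this
    omega

theorem key_eq_key_iff (hu : (u.2 : ℕ) < w) (hv : (v.2 : ℕ) < w) :
    key w u = key w v ↔ u = v := by
  refine ⟨fun h => ?_, fun h => h ▸ rfl⟩
  have h₁ := (key_lt_key_iff hu hv).not.1 h.not_lt
  have h₂ := (key_lt_key_iff hv hu).not.1 h.symm.not_lt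
  ext <;> omega

theorem eq_iff_key_eq (hv : (v.2 : ℕ) < w) : u = v ↔ (u.2 : ℕ) < w ∧ key w u = key w v :=
  ⟨by rintro rfl; exact ⟨hv, rfl⟩, fun h => (key_eq_key_iff h.1 hv).1 h.2⟩

theorem key_mono (h : u ≤ v) : key w u ≤ key w v :=
  Nat.add_le_add (Nat.mul_le_mul_right w h.1) h.2

theorem key_lt_mul (hv : (v.2 : ℕ) < w) : key w v < n * w :=
  calc key w v < (v.1 + 1) * w := by rw [key, Nat.succ_mul]; omega
    _ ≤ n * w := Nat.mul_le_mul_right w v.1.isLt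

theorem exists_key_eq {k : ℕ} (hw : w ≤ n) (hk : k < n * w) :
    ∃ v : Fin n × Fin n, (v.2 : ℕ) < w ∧ key w v = k := by
  have hw0 : 0 < w := Nat.pos_of_ne_zero (by rintro rfl; simp at hk)
  have hkw : k % w < w := Nat.mod_lt k hw0
  refine ⟨(⟨k / w, Nat.div_lt_of_lt_mul (by rwa [mul_comm])⟩, ⟨k % w, by omega⟩), hkw, ?_⟩
  simp [key, Nat.div_add_mod']

def keyIco (w lo hi : ℕ) : Finset (Fin n × Fin n) :=
  univ.filter fun v => (v.2 : ℕ) < w ∧ lo ≤ key w v ∧ key w v < hi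

@[simp] theorem mem_keyIco {lo hi : ℕ} :
    v ∈ keyIco w lo hi ↔ (v.2 : ℕ) < w ∧ lo ≤ key w v ∧ key w v < hi := by
  simp [keyIco]

theorem card_keyIco_le {lo hi : ℕ} : (keyIco (n := n) w lo hi).card ≤ hi - lo := by
  simpa using card_le_card_of_injOn (key w) (t := Ico lo hi)
    (fun v hv => by simp_all) (fun u hu v hv h => (key_eq_key_iff (by simp_all) (by simp_all)).1 h)

theorem gridE_mem_keyIco (h : gridE n u v) (hv : (v.2 : ℕ) < w) :
    u ∈ keyIco w (key w v - w) (key w v) := by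
  rw [mem_keyIco]
  rcases h with ⟨h₁, h₂⟩ | ⟨h₁, h₂⟩
  · have : key w v = key w u + w := by simp only [key, h₁, h₂, Nat.succ_mul]; ring
    omega
  · have : key w v = key w u + 1 := by simp only [key, h₁, h₂]; ring
    omega

theorem le_of_mem_keyIco {lo hi : ℕ} (hw : (v.2 : ℕ) + 1 = w) (hhi : hi ≤ key w v + 1)
    (hu : u ∈ keyIco w lo hi) : u ≤ v := by
  rw [mem_keyIco] at hu
  have hv : (v.2 : ℕ) < w := by omega
  rcases Nat.lt_or_eq_of_le (Nat.le_of_lt_succ (hu.2.2.trans_le hhi)) with h | h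
  · have := (key_lt_key_iff hu.1 hv).1 h
    exact Prod.mk_le_mk.2 ⟨Fin.le_iff_val_le_val.2 (by omega), Fin.le_iff_val_le_val.2 (by omega)⟩
  · exact ((key_eq_key_iff hu.1 hv).1 h).le

variable {c : ℕ} {H S : Finset (Fin n × Fin n)}

theorem card_union_keyIco_le {k : ℕ} : (H ∪ keyIco w (k - w) k).card ≤ H.card + w :=
  (card_union_le _ _).trans (Nat.add_le_add_left (card_keyIco_le.trans (by omega)) _)

/-- The window `keyIco w (k - w) k` of the last `w` cells swept contains both predecessors
of the next cell `v`, so `v` can be unghosted and the oldest cell of the window ghosted. -/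
theorem reflTransGen_sweep_step {k : ℕ} (hw : w ≤ n) (hv : (v.2 : ℕ) < w) (hkv : key w v = k)
    (hc : H.card + w + 1 ≤ c) (hH : Disjoint H (keyIco w 0 (k + 1))) :
    ReflTransGen (SpookyMove (gridE n) c)
      (H ∪ keyIco w (k - w) k, (S ∪ keyIco w 0 k) \ keyIco w (k - w) k)
      (H ∪ keyIco w (k + 1 - w) (k + 1),
        (S ∪ keyIco w 0 (k + 1)) \ keyIco w (k + 1 - w) (k + 1)) := by
  have hcard : (H ∪ keyIco w (k - w) k).card + 1 ≤ c := by
    have := card_union_keyIco_le (H := H) (w := w) (k := k)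
    omega
  have hunghost : SpookyMove (gridE n) c
      (H ∪ keyIco w (k - w) k, (S ∪ keyIco w 0 k) \ keyIco w (k - w) k)
      (insert v (H ∪ keyIco w (k - w) k), ((S ∪ keyIco w 0 k) \ keyIco w (k - w) k).erase v) :=
    ⟨⟨v, .inr <| .inr <| .inr ⟨rfl, rfl, fun u hu =>
      mem_union_right _ (hkv ▸ gridE_mem_keyIco hu hv)⟩⟩, (card_insert_le _ _).trans hcard⟩
  have hHmem : ∀ u ∈ H, ¬((u.2 : ℕ) < w ∧ key w u < k + 1) :=
    fun u hu h => disjoint_left.1 hH hu (by simpa using h)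
  by_cases hwk : w ≤ k
  · obtain ⟨d, hd, hkd⟩ := exists_key_eq (k := k - w) hw (by have := key_lt_mul hv; omega)
    have hghost : SpookyMove (gridE n) c
        (insert v (H ∪ keyIco w (k - w) k), ((S ∪ keyIco w 0 k) \ keyIco w (k - w) k).erase v)
        ((insert v (H ∪ keyIco w (k - w) k)).erase d,
          insert d (((S ∪ keyIco w 0 k) \ keyIco w (k - w) k).erase v)) :=
      ⟨⟨d, .inr <| .inr <| .inl ⟨rfl, rfl⟩⟩, card_erase_le.trans ((card_insert_le _ _).trans hcard)⟩
    convert (ReflTransGen.single hunghost).tail hghost using 2 <;> ext u <;>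
      grind [mem_keyIco, eq_iff_key_eq hv, eq_iff_key_eq hd]
  · convert ReflTransGen.single hunghost using 2 <;> ext u <;> grind [mem_keyIco, eq_iff_key_eq hv]

theorem reflTransGen_sweep {k : ℕ} (hw : w ≤ n) (hk : k ≤ n * w) (hc : H.card + w + 1 ≤ c)
    (hH : Disjoint H (keyIco w 0 k)) :
    ReflTransGen (SpookyMove (gridE n) c) (H, S)
      (H ∪ keyIco w (k - w) k, (S ∪ keyIco w 0 k) \ keyIco w (k - w) k) := by
  induction k with
  | zero => convert ReflTransGen.refl using 2 <;> ext <;> simp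
  | succ k ih =>
    obtain ⟨v, hv, hkv⟩ := exists_key_eq hw (Nat.lt_of_succ_le hk)
    have hmono : keyIco (n := n) w 0 k ⊆ keyIco w 0 (k + 1) := fun u hu => by
      simp only [mem_keyIco] at hu ⊢
      omega
    exact (ih (by omega) (hH.mono_right hmono)).trans (reflTransGen_sweep_step hw hv hkv hc hH)

theorem reflTransGen_clear_ghost_by_rows (hc : H.card + v.2 + 2 ≤ c) (hH : ∀ u ∈ H, ¬u ≤ v)
    (hS : ∀ u ≤ v, u ∈ S) :
    ReflTransGen (SpookyMove (gridE n) c) (H, S) (H, S.erase v) := by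
  obtain ⟨w, hw⟩ : ∃ w, (v.2 : ℕ) + 1 = w := ⟨_, rfl⟩
  have hv : (v.2 : ℕ) < w := by omega
  have hsweep := reflTransGen_sweep (S := S) (c := c) (by omega) (key_lt_mul hv).le (by omega)
    (disjoint_left.2 fun u hu hu' => hH u hu (le_of_mem_keyIco hw (by omega) hu'))
  rw [union_eq_left.2 fun u hu => hS u (le_of_mem_keyIco hw (by omega) hu)] at hsweep
  set W := keyIco (n := n) w (key w v - w) (key w v)
  have hWv : ∀ u ∈ W, u ≤ v := fun u => le_of_mem_keyIco hw (by omega)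
  have hcard : (H ∪ W).card + 1 ≤ c := by
    have : (H ∪ W).card ≤ H.card + w := card_union_keyIco_le
    omega
  have hvW : v ∉ H ∪ W := by
    rw [mem_union, not_or]
    exact ⟨fun h => hH v h le_rfl, by simp [W]⟩
  have hclear := SpookyMove.reflTransGen_erase_ghost (A := H ∪ W) (S := S \ W) (v := v)
    (fun u hu => mem_union_right H (gridE_mem_keyIco hu hv)) hvW hcard
  convert hsweep.trans (hclear.trans (SpookyMove.reflTransGen_ghost_finset W (by omega))) using 2
  · exact (union_sdiff_cancel_right (disjoint_left.2 fun u hu huW => hH u hu (hWv u huW))).symm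
  · ext u
    have := hS u
    grind

theorem reflTransGen_clear_ghost (hc : H.card + min (v.1 : ℕ) v.2 + 2 ≤ c)
    (hH : ∀ u ∈ H, ¬u ≤ v) (hS : ∀ u ≤ v, u ∈ S) :
    ReflTransGen (SpookyMove (gridE n) c) (H, S) (H, S.erase v) := by
  rcases le_total v.2 v.1 with h | h
  · exact reflTransGen_clear_ghost_by_rows (by simpa [h] using hc) hH hS
  · let e := Equiv.prodComm (Fin n) (Fin n)
    have hswap := reflTransGen_clear_ghost_by_rows (c := c) (v := v.swap)
      (H := H.map e.toEmbedding) (S := S.map e.toEmbedding) (by simpa [h] using hc)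
      (fun u hu hle => hH u.swap (by simpa [e] using hu) (by simpa using Prod.swap_le_swap.2 hle))
      (fun u hle => by simpa [e] using hS u.swap (by simpa using Prod.swap_le_swap.2 hle))
    simpa [e, Finset.map_map] using SpookyMove.reflTransGen_map_equiv (F := gridE n) e.symm
      (fun _ _ => gridE_swap) hswap

variable [NeZero n]

theorem reflTransGen_pebble_top :
    ReflTransGen (SpookyMove (gridE n) (n + 1)) (∅, ∅)
      ({⊤}, keyIco n 0 (key n (⊤ : Fin n × Fin n))) := by
  have htop : ((⊤ : Fin n × Fin n).2 : ℕ) < n := Fin.isLt _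
  have hsweep := reflTransGen_sweep (H := ∅) (S := ∅) (c := n + 1) le_rfl
    (key_lt_mul htop).le (by simp) (disjoint_empty_left _)
  rw [empty_union, empty_union] at hsweep
  set W := keyIco (n := n) n (key n (⊤ : Fin n × Fin n) - n) (key n (⊤ : Fin n × Fin n))
  have hcard : W.card + 1 ≤ n + 1 := by
    have : W.card ≤ _ := card_keyIco_le
    omega
  have hpebble : SpookyMove (gridE n) (n + 1) (W, keyIco n 0 (key n (⊤ : Fin n × Fin n)) \ W)
      (insert ⊤ W, keyIco n 0 (key n (⊤ : Fin n × Fin n)) \ W) :=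
    ⟨⟨⊤, .inl ⟨rfl, rfl, fun u hu => gridE_mem_keyIco hu htop⟩⟩, (card_insert_le _ _).trans hcard⟩
  convert hsweep.tail hpebble |>.trans (SpookyMove.reflTransGen_ghost_finset W hpebble.2) using 2
  · ext u
    simp only [W, mem_sdiff, mem_insert, mem_singleton, mem_keyIco]
    grind
  · rw [sdiff_union_of_subset fun u hu => by simp only [W, mem_keyIco] at hu ⊢; omega]

theorem reflTransGen_clear_ghosts {m : ℕ} (hm : m ≤ key n (⊤ : Fin n × Fin n)) :
    ReflTransGen (SpookyMove (gridE n) (n + 1)) ({⊤}, keyIco n 0 m) ({⊤}, ∅) := by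
  induction m with
  | zero => convert ReflTransGen.refl using 2; ext; simp
  | succ m ih =>
    have htop : ((⊤ : Fin n × Fin n).2 : ℕ) < n := Fin.isLt _
    obtain ⟨v, hv, rfl⟩ := exists_key_eq le_rfl ((Nat.lt_of_succ_le hm).trans (key_lt_mul htop))
    have hvtop : ¬(⊤ ≤ v) := fun h => by
      rw [top_le_iff] at h
      subst h
      omega
    have hmin : min (v.1 : ℕ) v.2 + 2 ≤ n := by
      simp only [Prod.le_def, Prod.fst_top, Prod.snd_top, Fin.le_iff_val_le_val, Fin.val_top]
        at hvtop
      omega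
    refine (reflTransGen_clear_ghost (v := v) (by rw [card_singleton]; omega)
      (by simpa using hvtop) fun u hu => ?_).trans ?_
    · simp only [mem_keyIco, Fin.isLt, true_and, zero_le]
      exact Nat.lt_succ_of_le (key_mono hu)
    · convert ih (by omega) using 3
      ext u
      simp only [mem_erase, mem_keyIco, ne_eq, eq_iff_key_eq hv]
      omega

end GridPebbling

/-- For every `P ≥ 2` the grid DAG `G◇_P` has a spooky pebbling strategy
with pebbling cost at most `P + 1`. -/
theorem grid_spooky_upper (P : ℕ) (hP : 2 ≤ P) :
    ∃ (Pf Sf : ℕ → Finset (Fin P × Fin P)) (T : ℕ),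
      IsSpookyStrategy (gridE P) Pf Sf T ∧ pebCost Pf T ≤ P + 1 := by
  have : NeZero P := ⟨by omega⟩
  apply exists_spookyStrategy_of_reflTransGen
  rw [GridPebbling.rootFinset_gridE]
  exact GridPebbling.reflTransGen_pebble_top.trans (GridPebbling.reflTransGen_clear_ghosts le_rfl)
end
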